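/- arXiv:1705.01586 — 7 statements merged into one kernel-verified Lean document; each statement's English description precedes it below -/
import Mathlib

section
/- Let G and H be torsion-free groups of nilpotency class at most 2. If the power graphs P(G) and P(H) are isomorphic, then the directed power graphs of G and H are isomorphic. -/
/-- The power graph of a group `G`: distinct `x, y` are adjacent iff one is a
nonzero integer power of the other. -/
def powerGraph (G : Type*) [Group G] : SimpleGraph G where
  Adj x y := x ≠ y ∧ ∃ n : ℤ, n ≠ 0 ∧ (y = x ^ n ∨ x = y ^ n)
  symm := by
    constructor
    rintro x y ⟨hxy, n, hn, h⟩
    exact ⟨hxy.symm, n, hn, h.symm⟩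
  loopless := by constructor; rintro x ⟨h, -⟩; exact h rfl

/-- There is an arc `x → y` in the directed power graph iff `x ≠ y` and `y` is a
nonzero integer power of `x`. -/
def powArc {G : Type*} [Group G] (x y : G) : Prop :=
  x ≠ y ∧ ∃ n : ℤ, n ≠ 0 ∧ y = x ^ n

/-!
Commensurability (`x ^ m = y ^ n` for some `m, n ≠ 0`) is visible in the power graph: for
`x, y ≠ 1` it means distance at most two. So a power-graph isomorphism `f` maps commensurability
classes onto commensurability classes, and it suffices to match each class with its image by a
bijection preserving arcs. In a torsion-free group of class two, commensurable elements commute and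
have unique roots, so `ratLog g` identifies the class of `g` with a set of nonzero rationals, arcs
becoming integer ratios.

If some vertex of a class is adjacent to all others, the class and its image are both infinite
cyclic. Otherwise every element has a proper root, and comparing edges through common powers and
roots shows that `f` keeps the orientation of all edges `a ≺ b` of the class or reverses all of
them. In the first case `f` itself preserves arcs. In the second, `f` sends the cover `x ≺ x ^ p`
to a cover, which forces `x` to have a `p`-th root; so the class and its image are both divisible,
that is, both are `ℚ \ {0}` in exponent coordinates.
-/

theorem Commute.exists_zpow_eq_of_isCoprime {G : Type*} [Group G] {x y : G} (hxy : Commute x y)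
    {m n : ℤ} (hmn : IsCoprime m n) (h : x ^ m = y ^ n) : ∃ d : G, d ^ n = x ∧ d ^ m = y := by
  obtain ⟨a, b, hab⟩ := hmn
  have hc : Commute (x ^ b) (y ^ a) := hxy.zpow_zpow b a
  refine ⟨x ^ b * y ^ a, ?_, ?_⟩
  · rw [hc.mul_zpow, ← zpow_mul, ← zpow_mul, mul_comm a n, zpow_mul y n, ← h, ← zpow_mul,
      ← zpow_add]
    nth_rw 2 [← zpow_one x]
    congr 1
    linear_combination hab
  · rw [hc.mul_zpow, ← zpow_mul, ← zpow_mul, mul_comm b m, zpow_mul x m, h, ← zpow_mul,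
      ← zpow_add]
    nth_rw 2 [← zpow_one y]
    congr 1
    linear_combination hab

theorem Int.not_dvd_or_dvd_natAbs_add_one {a b : ℤ} (ha : 2 ≤ a.natAbs) (hab : a ∣ b)
    (hb : b ≠ 0) : ¬(a ∣ (b.natAbs + 1 : ℤ) ∨ (b.natAbs + 1 : ℤ) ∣ a) := by
  rintro (h | h)
  · have h1 : a ∣ 1 := by simpa using dvd_sub h (Int.dvd_natAbs.2 hab)
    have := Int.natAbs_dvd_natAbs.2 h1
    simp only [Int.natAbs_one, Nat.dvd_one] at this
    omega
  · have h1 := Int.natAbs_le_of_dvd_ne_zero h (by omega)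
    have h2 := Int.natAbs_le_of_dvd_ne_zero hab hb
    omega

theorem Int.exists_mul_of_not_irreducible {n : ℤ} (hn : 2 ≤ n.natAbs) (h : ¬Irreducible n) :
    ∃ a b : ℤ, n = a * b ∧ 2 ≤ a.natAbs ∧ 2 ≤ b.natAbs := by
  simp only [irreducible_iff, Int.isUnit_iff_natAbs_eq, not_and, not_forall, not_or] at h
  obtain ⟨a, b, rfl, ha, hb⟩ := h (by omega)
  rw [Int.natAbs_mul] at hn
  have ha0 : a.natAbs ≠ 0 := by rintro h0; simp [h0] at hn
  have hb0 : b.natAbs ≠ 0 := by rintro h0; simp [h0] at hn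
  exact ⟨a, b, rfl, by omega, by omega⟩

theorem Int.eq_or_eq_neg_of_mul_self_eq_mul {n m j : ℤ} (hn : Irreducible n) (h : n * n = m * j)
    (hm : 2 ≤ m.natAbs) (hj : 2 ≤ j.natAbs) : m = n ∨ m = -n := by
  have hq : n.natAbs.Prime := Int.prime_iff_natAbs_prime.1 hn.prime
  have hmj : m.natAbs * j.natAbs = n.natAbs ^ 2 := by
    rw [sq, ← Int.natAbs_mul, ← Int.natAbs_mul, h]
  obtain ⟨i, hi, hmi⟩ := (Nat.dvd_prime_pow hq).1 (Dvd.intro _ hmj)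
  interval_cases i
  · simp at hmi
    omega
  · exact Int.natAbs_eq_natAbs_iff.1 (by simpa using hmi)
  · rw [hmi] at hmj
    have := hq.two_le
    have : j.natAbs = 1 := by
      apply Nat.eq_of_mul_eq_mul_left (pow_pos hq.pos 2)
      simpa [mul_comm] using hmj
    omega

theorem exists_equiv_of_forall_exists_bijOn {α β : Type*} {R : α → α → Prop}
    {S : β → β → Prop} (hR : Equivalence R) (hS : Equivalence S) (f : α ≃ β)
    (hf : ∀ x y, S (f x) (f y) ↔ R x y) {r : α → α → Prop} {s : β → β → Prop}
    (hr : ∀ x y, r x y → R x y) (hs : ∀ x y, s x y → S x y)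
    (hloc : ∀ x, ∃ ψ : α → β, Set.BijOn ψ {y | R x y} {y | S (f x) y} ∧
      ∀ a ∈ {y | R x y}, ∀ b ∈ {y | R x y}, (r a b ↔ s (ψ a) (ψ b))) :
    ∃ e : α ≃ β, ∀ x y, r x y ↔ s (e x) (e y) := by
  choose ψ hbij harc using hloc
  let R' : Setoid α := ⟨R, hR⟩
  let c : α → α := fun x => (Quotient.mk R' x).out
  have hc : ∀ x, R (c x) x := fun x => Quotient.mk_out (s := R') x
  have hc_eq : ∀ {x y}, R x y → c x = c y := fun h => congrArg Quotient.out (Quotient.sound h)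
  let e : α → β := fun x => ψ (c x) x
  have he : ∀ x, S (f (c x)) (e x) := fun x => (hbij (c x)).mapsTo (hc x)
  have hback : ∀ {x y}, S (e x) (e y) → R x y := fun h =>
    hR.trans (hR.symm (hc _)) (hR.trans ((hf _ _).1 (hS.trans (he _) (hS.trans h (hS.symm (he _)))))
      (hc _))
  have harc' : ∀ {x y}, R x y → (r x y ↔ s (e x) (e y)) := fun h => by
    simp only [e, ← hc_eq h]
    exact harc _ _ (hc _) _ (hR.trans (hc _) h)
  refine ⟨Equiv.ofBijective e ⟨fun x y h => ?_, fun b => ?_⟩, fun x y =>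
    ⟨fun h => (harc' (hr x y h)).1 h, fun h => (harc' (hback (hs _ _ h))).2 h⟩⟩
  · have hxy : R x y := hback (by rw [h]; exact hS.refl _)
    refine (hbij (c x)).injOn (hc x) (hR.trans (hc x) hxy) ?_
    simpa only [e, hc_eq hxy] using h
  · obtain ⟨a, ha, hab⟩ := (hbij (c (f.symm b))).surjOn
      (by simpa using (hf _ _).2 (hc (f.symm b)) : S (f (c (f.symm b))) b)
    refine ⟨a, ?_⟩
    simpa only [e, hc_eq (hR.trans (hR.symm (hc _)) ha)] using hab

open scoped commutatorElement

namespace PowerGraph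

section Group

variable {G : Type*} [Group G]

/-- Not Mathlib's `IsMulTorsionFree`, which for non-abelian groups asks for unique roots. -/
def TorsionFree (G : Type*) [Group G] : Prop := ∀ g : G, g ≠ 1 → ¬IsOfFinOrder g

def Commensurable (x y : G) : Prop := ∃ m n : ℤ, m ≠ 0 ∧ n ≠ 0 ∧ x ^ m = y ^ n

def PowLt (a b : G) : Prop := ∃ n : ℤ, 2 ≤ n.natAbs ∧ b = a ^ n

local infixl:50 " ≺ " => PowLt

def Near (a b : G) : Prop := a = b ∨ (powerGraph G).Adj a b

theorem TorsionFree.zpow_ne_one (htf : TorsionFree G) {x : G} (hx : x ≠ 1) {n : ℤ}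
    (hn : n ≠ 0) : x ^ n ≠ 1 :=
  fun h => htf x hx (isOfFinOrder_iff_zpow_eq_one.2 ⟨n, hn, h⟩)

theorem TorsionFree.zpow_inj (htf : TorsionFree G) {x : G} (hx : x ≠ 1) {m n : ℤ} :
    x ^ m = x ^ n ↔ m = n :=
  (injective_zpow_iff_not_isOfFinOrder.2 (htf x hx)).eq_iff

theorem TorsionFree.inv_ne_self (htf : TorsionFree G) {x : G} (hx : x ≠ 1) : x⁻¹ ≠ x := by
  rw [← zpow_neg_one, Ne, ← zpow_one x, ← zpow_mul, htf.zpow_inj hx]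
  norm_num

namespace Commensurable

protected theorem refl (x : G) : Commensurable x x := ⟨1, 1, one_ne_zero, one_ne_zero, rfl⟩

protected theorem symm {x y : G} : Commensurable x y → Commensurable y x
  | ⟨m, n, hm, hn, h⟩ => ⟨n, m, hn, hm, h.symm⟩

protected theorem trans {x y z : G} : Commensurable x y → Commensurable y z → Commensurable x z
  | ⟨m, n, hm, hn, h⟩, ⟨p, q, hp, hq, h'⟩ =>
    ⟨m * p, q * n, mul_ne_zero hm hp, mul_ne_zero hq hn, by
      rw [zpow_mul, h, ← zpow_mul, mul_comm n p, zpow_mul, h', ← zpow_mul]⟩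

theorem ne_one (htf : TorsionFree G) {x y : G} (h : Commensurable x y) (hx : x ≠ 1) :
    y ≠ 1 := by
  obtain ⟨m, n, hm, -, h⟩ := h
  rintro rfl
  exact htf.zpow_ne_one hx hm (h.trans (one_zpow n))

protected theorem equivalence : Equivalence (Commensurable (G := G)) :=
  ⟨Commensurable.refl, Commensurable.symm, Commensurable.trans⟩

end Commensurable

theorem commensurable_zpow (x : G) {n : ℤ} (hn : n ≠ 0) : Commensurable x (x ^ n) :=
  ⟨n, 1, hn, one_ne_zero, (zpow_one _).symm⟩

theorem commensurable_one_left (htf : TorsionFree G) {y : G} : Commensurable 1 y ↔ y = 1 :=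
  ⟨fun h => not_not.1 fun hy => h.symm.ne_one htf hy rfl, fun h => h ▸ .refl _⟩

theorem commensurable_one_right (htf : TorsionFree G) {x : G} : Commensurable x 1 ↔ x = 1 :=
  ⟨fun h => (commensurable_one_left htf).1 h.symm, fun h => h ▸ .refl _⟩

theorem setOf_commensurable_eq {g u : G} (h : Commensurable g u) :
    {x | Commensurable g x} = {x | Commensurable u x} :=
  Set.ext fun _ => ⟨h.symm.trans, h.trans⟩

theorem Commensurable.of_powArc {x y : G} (h : powArc x y) : Commensurable x y := by
  obtain ⟨-, n, hn, rfl⟩ := h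
  exact commensurable_zpow x hn

section ClassTwo

variable (htf : TorsionFree G)
include htf

theorem eq_of_zpow_eq_zpow {x y : G} (hxy : Commute x y) {n : ℤ} (hn : n ≠ 0)
    (h : x ^ n = y ^ n) : x = y := by
  by_contra hne
  refine htf.zpow_ne_one (mul_inv_eq_one.not.2 hne) hn ?_
  rw [hxy.inv_right.mul_zpow, inv_zpow, h, mul_inv_cancel]

variable (hG : commutator G ≤ Subgroup.center G)
include hG

/-- In class two, conjugation by `x` multiplies `y ^ n` by the central element `⁅x, y⁆ ^ n`. -/
theorem commute_of_commute_zpow {x y : G} {n : ℤ} (hn : n ≠ 0) (h : Commute x (y ^ n)) :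
    Commute x y := by
  set c := ⁅x, y⁆
  have hc : c ∈ Subgroup.center G :=
    hG (Subgroup.commutator_mem_commutator (Subgroup.mem_top x) (Subgroup.mem_top y))
  have hcy : Commute c y := (Subgroup.mem_center_iff.1 hc y).symm
  have hconj : x * y * x⁻¹ = c * y := by simp [c, commutatorElement_def]
  have : c ^ n = 1 := by
    have := conj_zpow (i := n) (a := x) (b := y)
    rw [hconj, hcy.mul_zpow, h.eq, mul_inv_cancel_right] at this
    exact mul_eq_right.1 this
  by_contra hxy
  exact htf.zpow_ne_one (commutatorElement_eq_one_iff_commute.not.2 hxy) hn this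

theorem Commensurable.commute {x y : G} (h : Commensurable x y) : Commute x y := by
  obtain ⟨m, n, -, hn, h⟩ := h
  exact commute_of_commute_zpow htf hG hn (h ▸ Commute.self_zpow x m)

end ClassTwo

theorem powLt_zpow (a : G) {n : ℤ} (hn : 2 ≤ n.natAbs) : a ≺ a ^ n := ⟨n, hn, rfl⟩

theorem PowLt.trans {a b c : G} : a ≺ b → b ≺ c → a ≺ c
  | ⟨m, hm, hb⟩, ⟨n, hn, hc⟩ =>
    ⟨m * n, by rw [Int.natAbs_mul]; nlinarith, by rw [hc, hb, zpow_mul]⟩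

theorem PowLt.commensurable {a b : G} : a ≺ b → Commensurable a b
  | ⟨n, hn, hb⟩ => hb ▸ commensurable_zpow a (by omega)

theorem PowLt.asymm {a b : G} (htf : TorsionFree G) (ha : a ≠ 1) (hab : a ≺ b) : ¬b ≺ a := by
  rintro ⟨n, hn, h⟩
  obtain ⟨m, hm, rfl⟩ := hab
  rw [← zpow_mul, ← zpow_one a, ← zpow_mul, htf.zpow_inj ha, one_mul] at h
  have := congrArg Int.natAbs h
  rw [Int.natAbs_mul, Int.natAbs_one] at this
  nlinarith

theorem not_powLt_inv (htf : TorsionFree G) {a : G} (ha : a ≠ 1) : ¬a ≺ a⁻¹ := by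
  rintro ⟨n, hn, h⟩
  rw [← zpow_neg_one, htf.zpow_inj ha] at h
  omega

theorem exists_powLt_powLt_iff (htf : TorsionFree G) {a : G} (ha : a ≠ 1) {n : ℤ}
    (hn : 2 ≤ n.natAbs) : (∃ w, a ≺ w ∧ w ≺ a ^ n) ↔ ¬Irreducible n := by
  constructor
  · rintro ⟨_, ⟨i, hi, rfl⟩, ⟨j, hj, h⟩⟩ hirr
    rw [← zpow_mul, htf.zpow_inj ha] at h
    rcases hirr.isUnit_or_isUnit h with hu | hu <;> rw [Int.isUnit_iff_natAbs_eq] at hu <;> omega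
  · intro h
    obtain ⟨i, j, rfl, hi, hj⟩ := Int.exists_mul_of_not_irreducible hn h
    exact ⟨a ^ i, powLt_zpow a hi, j, hj, zpow_mul a i j⟩

theorem powArc_iff (htf : TorsionFree G) {a b : G} (ha : a ≠ 1) :
    powArc a b ↔ b = a⁻¹ ∨ a ≺ b := by
  constructor
  · rintro ⟨hne, n, hn, rfl⟩
    by_cases h2 : 2 ≤ n.natAbs
    · exact Or.inr (powLt_zpow a h2)
    obtain rfl | rfl : n = 1 ∨ n = -1 := by omega
    · exact absurd (zpow_one a).symm hne
    · exact Or.inl (zpow_neg_one a)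
  · rintro (rfl | ⟨n, hn, rfl⟩)
    · exact ⟨(htf.inv_ne_self ha).symm, -1, by norm_num, (zpow_neg_one a).symm⟩
    · refine ⟨fun h => ?_, n, by omega, rfl⟩
      rw [← zpow_one a, ← zpow_mul, one_mul, htf.zpow_inj ha] at h
      omega

theorem adj_iff_powArc {a b : G} : (powerGraph G).Adj a b ↔ powArc a b ∨ powArc b a := by
  constructor
  · rintro ⟨hne, n, hn, h | h⟩
    exacts [Or.inl ⟨hne, n, hn, h⟩, Or.inr ⟨hne.symm, n, hn, h⟩]
  · rintro (⟨hne, n, hn, h⟩ | ⟨hne, n, hn, h⟩)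
    exacts [⟨hne, n, hn, Or.inl h⟩, ⟨hne.symm, n, hn, Or.inr h⟩]

theorem not_adj_one (htf : TorsionFree G) {y : G} : ¬(powerGraph G).Adj 1 y := by
  rintro ⟨hne, n, hn, h | h⟩
  · exact hne (h.trans (one_zpow n)).symm
  · exact htf.zpow_ne_one (Ne.symm hne) hn h.symm

theorem adj_inv_self (htf : TorsionFree G) {x : G} (hx : x ≠ 1) : (powerGraph G).Adj x x⁻¹ :=
  ⟨(htf.inv_ne_self hx).symm, -1, by norm_num, Or.inl (zpow_neg_one x).symm⟩

theorem PowLt.adj (htf : TorsionFree G) {a b : G} (ha : a ≠ 1) (h : a ≺ b) :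
    (powerGraph G).Adj a b :=
  adj_iff_powArc.2 (Or.inl ((powArc_iff htf ha).2 (Or.inr h)))

theorem PowLt.near {a b : G} (h : a ≺ b) : Near a b := by
  obtain ⟨n, hn, rfl⟩ := h
  by_cases hab : a = a ^ n
  exacts [Or.inl hab, Or.inr ⟨hab, n, by omega, Or.inl rfl⟩]

theorem Near.symm {a b : G} : Near a b → Near b a :=
  Or.imp Eq.symm SimpleGraph.Adj.symm

theorem near_iff {a b : G} (ha : a ≠ 1) (hb : b ≠ 1) :
    Near a b ↔ ∃ n : ℤ, b = a ^ n ∨ a = b ^ n := by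
  constructor
  · rintro (rfl | ⟨-, n, -, h⟩)
    exacts [⟨1, Or.inl (zpow_one a).symm⟩, ⟨n, h⟩]
  · rintro ⟨n, h⟩
    refine or_iff_not_imp_left.2 fun hab => ⟨hab, n, ?_, h⟩
    rintro rfl
    rcases h with h | h
    exacts [hb (h.trans (zpow_zero a)), ha (h.trans (zpow_zero b))]

theorem near_one_iff (htf : TorsionFree G) {a : G} : Near a 1 ↔ a = 1 :=
  ⟨fun h => h.elim id fun h => absurd h.symm (not_adj_one htf), Or.inl⟩

theorem Near.ne_one (htf : TorsionFree G) {a c : G} (h : Near a c) (ha : a ≠ 1) : c ≠ 1 := by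
  rintro rfl
  exact ha ((near_one_iff htf).1 h)

theorem Near.commensurable {a b : G} (ha : a ≠ 1) (hb : b ≠ 1) (h : Near a b) :
    Commensurable a b := by
  obtain ⟨n, rfl | rfl⟩ := (near_iff ha hb).1 h
  · exact commensurable_zpow a fun hn => hb (by rw [hn, zpow_zero])
  · exact (commensurable_zpow b fun hn => ha (by rw [hn, zpow_zero])).symm

theorem near_zpow_zpow_iff (htf : TorsionFree G) {x : G} (hx : x ≠ 1) {m n : ℤ} (hm : m ≠ 0)
    (hn : n ≠ 0) : Near (x ^ m) (x ^ n) ↔ m ∣ n ∨ n ∣ m := by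
  rw [near_iff (htf.zpow_ne_one hx hm) (htf.zpow_ne_one hx hn)]
  simp only [← zpow_mul, htf.zpow_inj hx, exists_or]
  rfl

theorem near_inv_left_iff (htf : TorsionFree G) {x z : G} : Near x⁻¹ z ↔ Near x z := by
  rcases eq_or_ne x 1 with rfl | hx
  · rw [inv_one]
  rcases eq_or_ne z 1 with rfl | hz
  · rw [near_one_iff htf, near_one_iff htf, inv_eq_one]
  rw [near_iff (inv_ne_one.2 hx) hz, near_iff hx hz]
  constructor <;> rintro ⟨n, h⟩ <;> refine ⟨-n, ?_⟩ <;>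
    simpa [zpow_neg, inv_zpow', inv_eq_iff_eq_inv] using h

theorem commensurable_iff_exists_near (htf : TorsionFree G) {a b : G} (ha : a ≠ 1)
    (hb : b ≠ 1) : Commensurable a b ↔ ∃ c, Near a c ∧ Near c b := by
  constructor
  · rintro ⟨m, n, hm, hn, h⟩
    have hc := htf.zpow_ne_one ha hm
    refine ⟨a ^ m, (near_iff ha hc).2 ⟨m, Or.inl rfl⟩, ?_⟩
    rw [h] at hc ⊢
    exact (near_iff hc hb).2 ⟨n, Or.inr rfl⟩
  · rintro ⟨c, h₁, h₂⟩
    have hc := h₁.ne_one htf ha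
    exact (h₁.commensurable ha hc).trans (h₂.commensurable hc hb)

/-- A proper power `y = x ^ n` is no closed twin of `x`: `x ^ (|n| + 1)` is near `x` but not
near `y`. -/
theorem eq_inv_of_near_iff (htf : TorsionFree G) {x y : G} (hx : x ≠ 1) (hxy : x ≠ y)
    (h : ∀ z, Near x z ↔ Near y z) : y = x⁻¹ := by
  have key : ∀ x y : G, x ≠ 1 → y ≠ 1 → x ≠ y → (∀ z, Near x z ↔ Near y z) →
      ∀ n : ℤ, y = x ^ n → y = x⁻¹ := by
    rintro x _ hx hy hxy h n rfl
    by_cases hn : 2 ≤ n.natAbs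
    · have hn0 : n ≠ 0 := by omega
      refine absurd ((h (x ^ (n.natAbs + 1 : ℤ))).1 ?_) ?_
      · exact (near_iff hx (htf.zpow_ne_one hx (by omega))).2 ⟨_, Or.inl rfl⟩
      · rw [near_zpow_zpow_iff htf hx hn0 (by omega)]
        exact Int.not_dvd_or_dvd_natAbs_add_one hn dvd_rfl hn0
    obtain rfl | rfl | rfl : n = 0 ∨ n = 1 ∨ n = -1 := by omega
    · exact absurd (zpow_zero x) hy
    · exact absurd (zpow_one x).symm hxy
    · exact zpow_neg_one x
  have hy : y ≠ 1 := ((h y).2 (Or.inl rfl)).ne_one htf hx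
  obtain ⟨n, h' | h'⟩ := (near_iff hx hy).1 ((h y).2 (Or.inl rfl))
  · exact key x y hx hy hxy h n h'
  · rw [key y x hy hx hxy.symm (fun z => (h z).symm) n h', inv_inv]

theorem eq_zpow_of_forall_near (htf : TorsionFree G) {u y : G} (hu : u ≠ 1)
    (huniv : ∀ z, Commensurable u z → Near u z) (hy : Commensurable u y) :
    ∃ k : ℤ, y = u ^ k := by
  have hy1 := hy.ne_one htf hu
  obtain ⟨k, h | h⟩ := (near_iff hu hy1).1 (huniv y hy)
  · exact ⟨k, h⟩
  have hk0 : k ≠ 0 := by rintro rfl; exact hu (h.trans (zpow_zero y))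
  by_cases hk : 2 ≤ k.natAbs
  · have hz := huniv _ (hy.trans (commensurable_zpow y (n := k.natAbs + 1) (by omega)))
    rw [h, near_zpow_zpow_iff htf hy1 hk0 (by omega)] at hz
    exact absurd hz (Int.not_dvd_or_dvd_natAbs_add_one hk dvd_rfl hk0)
  obtain rfl | rfl : k = 1 ∨ k = -1 := by omega
  · exact ⟨1, by rw [h, zpow_one, zpow_one]⟩
  · exact ⟨-1, by rw [h, zpow_neg_one, zpow_neg_one, inv_inv]⟩

/-- If `x ^ m' = y ^ n'` with `m', n'` coprime, then `x = d ^ n'` and `y = d ^ m'`; unless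
`n' = ±1`, this is a proper root of `x`. -/
theorem exists_powLt_of_not_near (htf : TorsionFree G) (hG : commutator G ≤ Subgroup.center G)
    {x y : G} (hx : x ≠ 1) (hxy : Commensurable x y) (h : ¬Near x y) : ∃ d, d ≺ x := by
  have hc := hxy.commute htf hG
  have hy := hxy.ne_one htf hx
  obtain ⟨m, n, hm, hn, hmn⟩ := hxy
  obtain ⟨k, m', n', hk, hcop, rfl, rfl⟩ :=
    Int.exists_gcd_one' (Int.gcd_pos_of_ne_zero_left n hm)
  have h' : x ^ m' = y ^ n' := eq_of_zpow_eq_zpow htf (hc.zpow_zpow m' n') (n := k) (by omega)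
    (by rw [← zpow_mul, ← zpow_mul, hmn])
  obtain ⟨d, hdx, hdy⟩ :=
    hc.exists_zpow_eq_of_isCoprime (Int.isCoprime_iff_gcd_eq_one.2 hcop) h'
  by_cases hn' : 2 ≤ n'.natAbs
  · exact ⟨d, n', hn', hdx.symm⟩
  refine absurd ((near_iff hx hy).2 ?_) h
  obtain rfl | rfl : n' = 1 ∨ n' = -1 := by
    have : n' ≠ 0 := left_ne_zero_of_mul hn
    omega
  · exact ⟨m', Or.inl (by rw [← hdy, ← hdx, zpow_one])⟩
  · exact ⟨-m', Or.inl (by rw [← hdy, ← hdx, ← zpow_mul, neg_mul_neg, one_mul])⟩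

open Classical in
/-- `ratLog g x = m / n` when `x ^ n = g ^ m`; junk value `0` when `x` is not commensurable
with `g`. -/
noncomputable def ratLog (g x : G) : ℚ :=
  if h : ∃ p : ℤ × ℤ, p.2 ≠ 0 ∧ x ^ p.2 = g ^ p.1 then h.choose.1 / h.choose.2 else 0

section RatLog

variable (htf : TorsionFree G) {g : G} (hg : g ≠ 1)
include htf hg

theorem ratLog_eq {x : G} {m n : ℤ} (hn : n ≠ 0) (h : x ^ n = g ^ m) :
    ratLog g x = m / n := by
  have hex : ∃ p : ℤ × ℤ, p.2 ≠ 0 ∧ x ^ p.2 = g ^ p.1 := ⟨(m, n), hn, h⟩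
  obtain ⟨hn', h'⟩ := hex.choose_spec
  rw [ratLog, dif_pos hex, div_eq_div_iff (by exact_mod_cast hn') (by exact_mod_cast hn)]
  have : g ^ (hex.choose.1 * n) = g ^ (m * hex.choose.2) := by
    rw [zpow_mul, ← h', ← zpow_mul, mul_comm hex.choose.2 n, zpow_mul, h, ← zpow_mul]
  exact_mod_cast (htf.zpow_inj hg).1 this

theorem ratLog_self : ratLog g g = 1 := by
  rw [ratLog_eq htf hg one_ne_zero rfl, Int.cast_one, div_one]

theorem ratLog_zpow {x : G} (hx : Commensurable g x) (k : ℤ) :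
    ratLog g (x ^ k) = k * ratLog g x := by
  obtain ⟨m, n, -, hn, h⟩ := hx
  rw [ratLog_eq htf hg hn h.symm,
    ratLog_eq htf hg hn (m := m * k)
      (by rw [← zpow_mul, mul_comm k n, zpow_mul, ← h, ← zpow_mul])]
  push_cast
  ring

theorem ratLog_ne_zero {x : G} (hx : Commensurable g x) : ratLog g x ≠ 0 := by
  obtain ⟨m, n, hm, hn, h⟩ := hx
  rw [ratLog_eq htf hg hn h.symm]
  exact div_ne_zero (by exact_mod_cast hm) (by exact_mod_cast hn)

variable (hG : commutator G ≤ Subgroup.center G)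
include hG

theorem ratLog_injOn : Set.InjOn (ratLog g) {x | Commensurable g x} := by
  intro x hx y hy h
  have hc := (hx.symm.trans hy).commute htf hG
  obtain ⟨m, n, -, hn, hxe⟩ := hx
  obtain ⟨p, q, -, hq, hye⟩ := hy
  rw [ratLog_eq htf hg hn hxe.symm, ratLog_eq htf hg hq hye.symm,
    div_eq_div_iff (by exact_mod_cast hn) (by exact_mod_cast hq)] at h
  have hcross : m * q = p * n := by exact_mod_cast h
  refine eq_of_zpow_eq_zpow htf hc (mul_ne_zero hn hq) ?_
  calc x ^ (n * q) = g ^ (m * q) := by rw [zpow_mul, ← hxe, ← zpow_mul]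
    _ = g ^ (p * n) := by rw [hcross]
    _ = y ^ (n * q) := by rw [zpow_mul, hye, ← zpow_mul, mul_comm q n]

theorem zpow_eq_iff_ratLog {a b : G} (ha : Commensurable g a) (hb : Commensurable g b) (k : ℤ) :
    b = a ^ k ↔ ratLog g b = k * ratLog g a := by
  refine ⟨fun h => h ▸ ratLog_zpow htf hg ha k, fun h => ?_⟩
  have hk : k ≠ 0 := by
    rintro rfl
    exact ratLog_ne_zero htf hg hb (by rw [h, Int.cast_zero, zero_mul])
  exact ratLog_injOn htf hg hG hb (ha.trans (commensurable_zpow a hk))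
    (h.trans (ratLog_zpow htf hg ha k).symm)

theorem powArc_iff_ratLog {a b : G} (ha : Commensurable g a) (hb : Commensurable g b) :
    powArc a b ↔
      ratLog g a ≠ ratLog g b ∧ ∃ k : ℤ, k ≠ 0 ∧ ratLog g b = k * ratLog g a := by
  simp only [powArc, Ne, ← (ratLog_injOn htf hg hG).eq_iff ha hb,
    zpow_eq_iff_ratLog htf hg hG ha hb]

end RatLog

theorem ratLog_image_of_forall_near (htf : TorsionFree G) {u : G} (hu : u ≠ 1)
    (huniv : ∀ z, Commensurable u z → Near u z) :
    ratLog u '' {x | Commensurable u x} = Int.cast '' {k : ℤ | k ≠ 0} := by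
  ext q
  constructor
  · rintro ⟨y, hy, rfl⟩
    obtain ⟨k, rfl⟩ := eq_zpow_of_forall_near htf hu huniv hy
    refine ⟨k, fun hk => hy.ne_one htf hu (by rw [hk, zpow_zero]), ?_⟩
    rw [ratLog_zpow htf hu (.refl u), ratLog_self htf hu, mul_one]
  · rintro ⟨k, hk, rfl⟩
    exact ⟨u ^ k, commensurable_zpow u hk, by
      rw [ratLog_zpow htf hu (.refl u), ratLog_self htf hu, mul_one]⟩

theorem ratLog_image_of_forall_exists_zpow_eq (htf : TorsionFree G) {g : G} (hg : g ≠ 1)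
    (hdiv : ∀ n : ℕ, n ≠ 0 → ∃ t : G, t ^ (n : ℤ) = g) :
    ratLog g '' {x | Commensurable g x} = {q | q ≠ 0} := by
  ext q
  constructor
  · rintro ⟨x, hx, rfl⟩
    exact ratLog_ne_zero htf hg hx
  · intro hq
    obtain ⟨t, ht⟩ := hdiv q.den q.den_nz
    have hden : (q.den : ℤ) ≠ 0 := by exact_mod_cast q.den_nz
    have h : (t ^ q.num) ^ (q.den : ℤ) = g ^ q.num := by rw [← zpow_mul, mul_comm, zpow_mul, ht]
    refine ⟨t ^ q.num, ⟨q.num, q.den, Rat.num_ne_zero.2 hq, hden, h.symm⟩, ?_⟩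
    rw [ratLog_eq htf hg hden h, Int.cast_natCast, Rat.num_div_den]

section Iso

variable {H : Type*} [Group H] (htG : TorsionFree G) (htH : TorsionFree H)
  (f : powerGraph G ≃g powerGraph H)

omit htG htH in
theorem near_apply_iff {a b : G} : Near (f a) (f b) ↔ Near a b := by
  simp only [Near, f.injective.eq_iff, f.map_adj_iff]

/-- `x ^ 2` stands for any proper power of `x`: by `apply_powLt_zpow_iff_upward`, `f` preserves
the orientation of either all or none of the edges `x ≺ x ^ n`. -/
def Upward (x : G) : Prop := f x ≺ f (x ^ (2 : ℤ))

def PreservesOn (φ : G → H) (g : G) : Prop :=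
  ∀ a b, Commensurable g a → Commensurable g b → (a ≺ b ↔ φ a ≺ φ b)

def ReversesOn (φ : G → H) (g : G) : Prop :=
  ∀ a b, Commensurable g a → Commensurable g b → (a ≺ b ↔ φ b ≺ φ a)

def ClassArcIso (g : G) (h : H) : Prop :=
  ∃ ψ : G → H, Set.BijOn ψ {x | Commensurable g x} {y | Commensurable h y} ∧
    ∀ a ∈ {x | Commensurable g x}, ∀ b ∈ {x | Commensurable g x},
      (powArc a b ↔ powArc (ψ a) (ψ b))

include htG htH

theorem apply_one : f 1 = 1 := by
  by_contra h
  have := adj_inv_self htH h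
  rw [← f.apply_symm_apply (f 1)⁻¹, f.map_adj_iff] at this
  exact not_adj_one htG this

theorem apply_eq_one_iff {x : G} : f x = 1 ↔ x = 1 := by
  rw [← apply_one htG htH f, f.injective.eq_iff]

theorem apply_ne_one {x : G} (hx : x ≠ 1) : f x ≠ 1 :=
  (apply_eq_one_iff htG htH f).not.2 hx

theorem commensurable_apply_iff {a b : G} :
    Commensurable (f a) (f b) ↔ Commensurable a b := by
  rcases eq_or_ne a 1 with rfl | ha
  · rw [apply_one htG htH f, commensurable_one_left htH, commensurable_one_left htG,
      apply_eq_one_iff htG htH f]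
  rcases eq_or_ne b 1 with rfl | hb
  · rw [apply_one htG htH f, commensurable_one_right htH, commensurable_one_right htG,
      apply_eq_one_iff htG htH f]
  rw [commensurable_iff_exists_near htH (apply_ne_one htG htH f ha)
    (apply_ne_one htG htH f hb), commensurable_iff_exists_near htG ha hb,
    f.surjective.exists]
  simp only [near_apply_iff]

theorem apply_inv {x : G} (hx : x ≠ 1) : f x⁻¹ = (f x)⁻¹ := by
  refine eq_inv_of_near_iff htH (apply_ne_one htG htH f hx)
    (f.injective.ne (htG.inv_ne_self hx).symm) fun z => ?_
  obtain ⟨w, rfl⟩ := f.surjective z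
  rw [near_apply_iff, near_apply_iff, near_inv_left_iff htG]

theorem powLt_or_powLt_of_apply {a b : G} (ha : a ≠ 1) (h : f a ≺ f b) :
    a ≺ b ∨ b ≺ a := by
  have hfa : f a ≠ 1 := apply_ne_one htG htH f ha
  have hadj := f.map_adj_iff.1 (h.adj htH hfa)
  have hinv : b ≠ a⁻¹ := by
    rintro rfl
    rw [apply_inv htG htH f ha] at h
    exact not_powLt_inv htH hfa h
  rcases adj_iff_powArc.1 hadj with h' | h'
  · exact .inl (((powArc_iff htG ha).1 h').resolve_left hinv)
  · have hb : b ≠ 1 := fun hb => not_adj_one htG (hb ▸ hadj.symm)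
    refine .inr (((powArc_iff htG hb).1 h').resolve_left fun hab => hinv ?_)
    rw [hab, inv_inv]

theorem apply_powLt_or_powLt {a b : G} (ha : a ≠ 1) (h : a ≺ b) :
    f a ≺ f b ∨ f b ≺ f a := by
  simpa using powLt_or_powLt_of_apply htH htG f.symm (apply_ne_one htG htH f ha)
    (by simpa using h)

theorem apply_powLt_iff_of_not_near_right {x y w : G} (hx : x ≠ 1) (hy : x ≺ y) (hw : x ≺ w)
    (hyw : ¬Near y w) : f x ≺ f y ↔ f x ≺ f w := by
  have key : ∀ {y w}, x ≺ y → x ≺ w → ¬Near y w → f x ≺ f y → f x ≺ f w :=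
    fun hy hw hyw hfy => (apply_powLt_or_powLt htG htH f hx hw).resolve_right fun hfw =>
      hyw ((near_apply_iff f).1 (hfw.trans hfy).near).symm
  exact ⟨key hy hw hyw, key hw hy fun h => hyw h.symm⟩

theorem apply_powLt_iff_of_not_near_left {x z y : G} (hx : x ≠ 1) (hz : z ≠ 1) (hxy : x ≺ y)
    (hzy : z ≺ y) (hxz : ¬Near x z) : f x ≺ f y ↔ f z ≺ f y := by
  have key : ∀ {x z}, z ≠ 1 → x ≺ y → z ≺ y → ¬Near x z →
      f x ≺ f y → f z ≺ f y :=
    fun hz hxy hzy hxz hfx => (apply_powLt_or_powLt htG htH f hz hzy).resolve_right fun hfz =>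
      hxz ((near_apply_iff f).1 (hfx.trans hfz).near)
  exact ⟨key hz hxy hzy hxz, key hx hzy hxy fun h => hxz h.symm⟩

theorem apply_powLt_zpow_iff_upward {x : G} (hx : x ≠ 1) {n : ℤ} (hn : 2 ≤ n.natAbs) :
    f x ≺ f (x ^ n) ↔ Upward f x := by
  set k : ℤ := (2 * n).natAbs + 1
  have hk : 2 ≤ k.natAbs := by omega
  have hnk : ¬Near (x ^ n) (x ^ k) := by
    rw [near_zpow_zpow_iff htG hx (by omega) (by omega)]
    exact Int.not_dvd_or_dvd_natAbs_add_one hn (dvd_mul_left n 2) (by omega)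
  have h2k : ¬Near (x ^ (2 : ℤ)) (x ^ k) := by
    rw [near_zpow_zpow_iff htG hx (by norm_num) (by omega)]
    exact Int.not_dvd_or_dvd_natAbs_add_one (by norm_num) (dvd_mul_right 2 n) (by omega)
  rw [Upward,
    apply_powLt_iff_of_not_near_right htG htH f hx (powLt_zpow x hn) (powLt_zpow x hk) hnk,
    apply_powLt_iff_of_not_near_right htG htH f hx (powLt_zpow x (by norm_num))
      (powLt_zpow x hk) h2k]

/-- Below `y = d ^ (e * n * s)` sit `d ^ e`, `d ^ (e * n)` and `d ^ s`, where `s` is chosen so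
that `d ^ s` is near neither of the other two. -/
theorem upward_zpow_mul_iff {d : G} (hd : d ≠ 1) {e n : ℤ} (he : 2 ≤ e.natAbs)
    (hn : n ≠ 0) : Upward f (d ^ (e * n)) ↔ Upward f (d ^ e) := by
  have hen : 2 ≤ (e * n).natAbs := by rw [Int.natAbs_mul]; nlinarith [Int.natAbs_pos.2 hn]
  set s : ℤ := (e * n).natAbs + 1
  have hs : 2 ≤ s.natAbs := by omega
  have hns : 2 ≤ (n * s).natAbs := by rw [Int.natAbs_mul]; nlinarith [Int.natAbs_pos.2 hn]
  have hne : ∀ {k : ℤ}, 2 ≤ k.natAbs → d ^ k ≠ 1 :=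
    fun hk => htG.zpow_ne_one hd (by omega)
  have hzy : d ^ s ≺ d ^ (e * n * s) := ⟨e * n, hen, by rw [← zpow_mul, mul_comm]⟩
  have hxz : ¬Near (d ^ e) (d ^ s) := by
    rw [near_zpow_zpow_iff htG hd (by omega) (by omega)]
    exact Int.not_dvd_or_dvd_natAbs_add_one he (dvd_mul_right e n) (by omega)
  have hwz : ¬Near (d ^ (e * n)) (d ^ s) := by
    rw [near_zpow_zpow_iff htG hd (by omega) (by omega)]
    exact Int.not_dvd_or_dvd_natAbs_add_one hen dvd_rfl (by omega)
  have hwy : d ^ (e * n * s) = (d ^ (e * n)) ^ s := zpow_mul _ _ _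
  have hxy : d ^ (e * n * s) = (d ^ e) ^ (n * s) := by rw [← zpow_mul, mul_assoc]
  calc Upward f (d ^ (e * n))
      ↔ f (d ^ (e * n)) ≺ f (d ^ (e * n * s)) := by
        rw [hwy, apply_powLt_zpow_iff_upward htG htH f (hne hen) hs]
    _ ↔ f (d ^ s) ≺ f (d ^ (e * n * s)) :=
        apply_powLt_iff_of_not_near_left htG htH f (hne hen) (hne hs) (hwy ▸ powLt_zpow _ hs)
          hzy hwz
    _ ↔ f (d ^ e) ≺ f (d ^ (e * n * s)) :=
        (apply_powLt_iff_of_not_near_left htG htH f (hne he) (hne hs)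
          (hxy ▸ powLt_zpow _ hns) hzy hxz).symm
    _ ↔ Upward f (d ^ e) := by rw [hxy, apply_powLt_zpow_iff_upward htG htH f (hne he) hns]

theorem upward_iff_of_commensurable {x z : G} (hx : x ≠ 1) (hrx : ∃ d, d ≺ x)
    (hrz : ∃ d, d ≺ z) (hxz : Commensurable x z) : Upward f x ↔ Upward f z := by
  have hz := hxz.ne_one htG hx
  obtain ⟨d, e, he, rfl⟩ := hrx
  obtain ⟨d', e', he', rfl⟩ := hrz
  obtain ⟨m, n, hm, hn, h⟩ := hxz
  have hd : d ≠ 1 := by rintro rfl; exact hx (one_zpow e)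
  have hd' : d' ≠ 1 := by rintro rfl; exact hz (one_zpow e')
  rw [← upward_zpow_mul_iff htG htH f hd he hm, ← upward_zpow_mul_iff htG htH f hd' he' hn,
    zpow_mul, zpow_mul, h]

theorem powLt_apply_dichotomy {g : G} (hg : g ≠ 1)
    (hroot : ∀ x, Commensurable g x → ∃ d, d ≺ x) :
    PreservesOn f g ∨ ReversesOn f g := by
  have key : ∀ a b, Commensurable g a → a ≺ b → (f a ≺ f b ↔ Upward f g) := by
    rintro a _ ha ⟨n, hn, rfl⟩
    have ha1 := ha.ne_one htG hg
    rw [apply_powLt_zpow_iff_upward htG htH f ha1 hn]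
    exact upward_iff_of_commensurable htG htH f ha1 (hroot a ha) (hroot g (.refl g)) ha.symm
  by_cases hup : Upward f g
  · refine .inl fun a b ha hb => ⟨fun h => (key a b ha h).2 hup, fun h => ?_⟩
    have ha1 := ha.ne_one htG hg
    exact (powLt_or_powLt_of_apply htG htH f ha1 h).resolve_right
      fun hba => h.asymm htH (apply_ne_one htG htH f ha1) ((key b a hb hba).2 hup)
  · refine .inr fun a b ha hb => ⟨fun h => ?_, fun h => ?_⟩
    · exact (apply_powLt_or_powLt htG htH f (ha.ne_one htG hg) h).resolve_left
        fun h' => hup ((key a b ha h).1 h')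
    · exact (powLt_or_powLt_of_apply htG htH f (hb.ne_one htG hg) h).resolve_left
        fun hba => hup ((key b a hb hba).1 h)

theorem powArc_apply_iff_of_preservesOn {g : G} (hg : g ≠ 1) (hpres : PreservesOn f g)
    {a b : G} (ha : Commensurable g a) (hb : Commensurable g b) :
    powArc a b ↔ powArc (f a) (f b) := by
  have ha1 := ha.ne_one htG hg
  rw [powArc_iff htG ha1, powArc_iff htH (apply_ne_one htG htH f ha1),
    ← apply_inv htG htH f ha1, f.injective.eq_iff, hpres a b ha hb]

theorem ReversesOn.symm {g : G} (hrev : ReversesOn f g) : ReversesOn f.symm (f g) := by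
  intro a b
  obtain ⟨a, rfl⟩ := f.surjective a
  obtain ⟨b, rfl⟩ := f.surjective b
  rw [commensurable_apply_iff htG htH f, commensurable_apply_iff htG htH f,
    f.symm_apply_apply, f.symm_apply_apply]
  exact fun ha hb => (hrev b a hb ha).symm

/-- If `f` reverses the edges of a class, then `x ≺ x ^ p`, which has nothing strictly in between,
goes to `f (x ^ p) ≺ f x = f (x ^ p) ^ n` with `n` irreducible. Pulling back `f x ^ n` gives `t`
with `t ≺ x`, and the only elements strictly between `f (x ^ p)` and `f x ^ n` are `f x` and
`(f x)⁻¹`; as `t ^ p` lies strictly between `t` and `x ^ p`, it is `x` or `x⁻¹`. -/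
theorem exists_zpow_prime_eq_of_reversesOn {g : G} (hg : g ≠ 1) (hrev : ReversesOn f g)
    {x : G} (hx : Commensurable g x) {p : ℕ} (hp : p.Prime) : ∃ t : G, t ^ (p : ℤ) = x := by
  have hx1 := hx.ne_one htG hg
  have hp2 : 2 ≤ (p : ℤ).natAbs := by simpa using hp.two_le
  have hy : Commensurable g (x ^ (p : ℤ)) := hx.trans (commensurable_zpow x (by omega))
  have hfy1 : f (x ^ (p : ℤ)) ≠ 1 := apply_ne_one htG htH f (hy.ne_one htG hg)
  obtain ⟨n, hn, hfx⟩ := (hrev x _ hx hy).1 (powLt_zpow x hp2)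
  have hnirr : Irreducible n := by
    by_contra hred
    obtain ⟨w, h₁, h₂⟩ := (exists_powLt_powLt_iff htH hfy1 hn).2 hred
    obtain ⟨w, rfl⟩ := f.surjective w
    have hw : Commensurable g w :=
      hy.trans ((commensurable_apply_iff htG htH f).1 h₁.commensurable)
    rw [← hfx] at h₂
    exact (exists_powLt_powLt_iff htG hx1 hp2).1
      ⟨w, (hrev x w hx hw).2 h₂, (hrev w _ hw hy).2 h₁⟩
      (Nat.prime_iff_prime_int.1 hp).irreducible
  obtain ⟨t, hft⟩ := f.surjective (f x ^ n)
  have hxt : f x ≺ f t := hft ▸ powLt_zpow _ hn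
  have ht : Commensurable g t := hx.trans ((commensurable_apply_iff htG htH f).1 hxt.commensurable)
  obtain ⟨δ, hδ, hxδ⟩ := (hrev t x ht hx).2 hxt
  have htp : t ≺ t ^ (p : ℤ) := powLt_zpow t hp2
  have htp' : Commensurable g (t ^ (p : ℤ)) := ht.trans htp.commensurable
  obtain ⟨m, hm, hfm⟩ := (hrev _ (x ^ (p : ℤ)) htp' hy).1
    ⟨δ, hδ, by rw [hxδ, ← zpow_mul, ← zpow_mul, mul_comm]⟩
  obtain ⟨j, hj, hfj⟩ := (hrev t _ ht htp').1 htp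
  have hnm : n * n = m * j := by
    rw [← htH.zpow_inj hfy1, zpow_mul, zpow_mul, ← hfm, ← hfj, hft, hfx]
  rcases Int.eq_or_eq_neg_of_mul_self_eq_mul hnirr hnm hm hj with rfl | rfl
  · exact ⟨t, f.injective (by rw [hfm, hfx])⟩
  · have : t ^ (p : ℤ) = x⁻¹ :=
      f.injective (by rw [hfm, apply_inv htG htH f hx1, hfx, zpow_neg])
    exact ⟨t⁻¹, by rw [inv_zpow, this, inv_inv]⟩

theorem exists_zpow_eq_of_reversesOn {g : G} (hg : g ≠ 1)
    (hrev : ReversesOn f g) {x : G}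
    (hx : Commensurable g x) {n : ℕ} (hn : n ≠ 0) : ∃ t : G, t ^ (n : ℤ) = x := by
  induction n using induction_on_primes generalizing x with
  | zero => exact absurd rfl hn
  | one => exact ⟨x, zpow_one x⟩
  | prime_mul p a hp ih =>
    have ha : a ≠ 0 := right_ne_zero_of_mul hn
    obtain ⟨s, rfl⟩ := ih hx ha
    have hs : Commensurable g s := hx.trans (commensurable_zpow s (by exact_mod_cast ha)).symm
    obtain ⟨t, rfl⟩ := exists_zpow_prime_eq_of_reversesOn htG htH f hg hrev hs hp
    exact ⟨t, by rw [Nat.cast_mul, zpow_mul]⟩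

theorem bijOn_commensurable (g : G) :
    Set.BijOn f {x | Commensurable g x} {y | Commensurable (f g) y} :=
  ⟨fun _ hx => (commensurable_apply_iff htG htH f).2 hx, f.injective.injOn, fun y hy =>
    ⟨f.symm y, (commensurable_apply_iff htG htH f).1 (by rwa [f.apply_symm_apply]),
      f.apply_symm_apply y⟩⟩

variable (hG : commutator G ≤ Subgroup.center G) (hH : commutator H ≤ Subgroup.center H)
include hG hH

theorem classArcIso_of_ratLog_image_eq {g : G} {h : H} (hg : g ≠ 1) (hh : h ≠ 1)
    (himg : ratLog g '' {x | Commensurable g x} = ratLog h '' {y | Commensurable h y}) :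
    ClassArcIso g h := by
  set ψ := Function.invFunOn (ratLog h) {y | Commensurable h y} ∘ ratLog g
  have hψ : ∀ a, Commensurable g a →
      Commensurable h (ψ a) ∧ ratLog h (ψ a) = ratLog g a := by
    intro a ha
    have hex : ratLog g a ∈ ratLog h '' {y | Commensurable h y} := himg ▸ ⟨a, ha, rfl⟩
    exact ⟨Function.invFunOn_mem hex, Function.invFunOn_eq hex⟩
  refine ⟨ψ, ⟨fun a ha => (hψ a ha).1, fun a ha b hb hab => ?_, fun y hy => ?_⟩,
    fun a ha b hb => ?_⟩
  · exact ratLog_injOn htG hg hG ha hb (by rw [← (hψ a ha).2, ← (hψ b hb).2, hab])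
  · obtain ⟨a, ha, hay⟩ : ratLog h y ∈ ratLog g '' {x | Commensurable g x} :=
      himg ▸ ⟨y, hy, rfl⟩
    exact ⟨a, ha, ratLog_injOn htH hh hH (hψ a ha).1 hy ((hψ a ha).2.trans hay)⟩
  · rw [powArc_iff_ratLog htG hg hG ha hb, powArc_iff_ratLog htH hh hH (hψ a ha).1 (hψ b hb).1,
      (hψ a ha).2, (hψ b hb).2]

theorem classArcIso_of_forall_near {u : G} (hu : u ≠ 1)
    (huniv : ∀ z, Commensurable u z → Near u z) : ClassArcIso u (f u) := by
  have hfu := apply_ne_one htG htH f hu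
  have hfuniv : ∀ z, Commensurable (f u) z → Near (f u) z := by
    intro z hz
    obtain ⟨z, rfl⟩ := f.surjective z
    exact (near_apply_iff f).2 (huniv z ((commensurable_apply_iff htG htH f).1 hz))
  refine classArcIso_of_ratLog_image_eq htG htH hG hH hu hfu ?_
  rw [ratLog_image_of_forall_near htG hu huniv, ratLog_image_of_forall_near htH hfu hfuniv]

theorem classArcIso_of_reversesOn {g : G} (hg : g ≠ 1) (hrev : ReversesOn f g) :
    ClassArcIso g (f g) := by
  have hfg := apply_ne_one htG htH f hg
  refine classArcIso_of_ratLog_image_eq htG htH hG hH hg hfg ?_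
  rw [ratLog_image_of_forall_exists_zpow_eq htG hg
      fun n hn => exists_zpow_eq_of_reversesOn htG htH f hg hrev (.refl g) hn,
    ratLog_image_of_forall_exists_zpow_eq htH hfg fun n hn =>
      exists_zpow_eq_of_reversesOn htH htG f.symm hfg (hrev.symm htG htH f) (.refl _) hn]

theorem classArcIso_apply (g : G) : ClassArcIso g (f g) := by
  rcases eq_or_ne g 1 with rfl | hg
  · refine ⟨f, bijOn_commensurable htG htH f 1, fun a ha b hb => ?_⟩
    obtain rfl := (commensurable_one_left htG).1 ha
    obtain rfl := (commensurable_one_left htG).1 hb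
    simp [powArc]
  by_cases huniv : ∃ u, Commensurable g u ∧ ∀ z, Commensurable u z → Near u z
  · obtain ⟨u, hgu, hu⟩ := huniv
    rw [ClassArcIso, setOf_commensurable_eq hgu,
      setOf_commensurable_eq ((commensurable_apply_iff htG htH f).2 hgu)]
    exact classArcIso_of_forall_near htG htH f hG hH (hgu.ne_one htG hg) hu
  have hroot : ∀ x, Commensurable g x → ∃ d, d ≺ x := by
    intro x hx
    obtain ⟨z, hxz, hnear⟩ : ∃ z, Commensurable x z ∧ ¬Near x z := by
      by_contra! h
      exact huniv ⟨x, hx, h⟩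
    exact exists_powLt_of_not_near htG hG (hx.ne_one htG hg) hxz hnear
  rcases powLt_apply_dichotomy htG htH f hg hroot with hpres | hrev
  · exact ⟨f, bijOn_commensurable htG htH f g,
      fun a ha b hb => powArc_apply_iff_of_preservesOn htG htH f hg hpres ha hb⟩
  · exact classArcIso_of_reversesOn htG htH f hG hH hg hrev

end Iso

end Group

end PowerGraph

/-- If `G` and `H` are torsion-free groups of nilpotency class at most 2 with
isomorphic power graphs, then their directed power graphs are isomorphic. -/
theorem stmt_1 (G H : Type*) [Group G] [Group H]
    (hGtf : ∀ g : G, g ≠ 1 → ¬ IsOfFinOrder g)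
    (hHtf : ∀ x : H, x ≠ 1 → ¬ IsOfFinOrder x)
    (hGnil : commutator G ≤ Subgroup.center G)
    (hHnil : commutator H ≤ Subgroup.center H)
    (h : Nonempty (powerGraph G ≃g powerGraph H)) :
    ∃ e : G ≃ H, ∀ x y : G, powArc x y ↔ powArc (e x) (e y) := by
  obtain ⟨f⟩ := h
  exact exists_equiv_of_forall_exists_bijOn PowerGraph.Commensurable.equivalence
    PowerGraph.Commensurable.equivalence f.toEquiv
    (fun _ _ => PowerGraph.commensurable_apply_iff hGtf hHtf f)
    (fun _ _ => PowerGraph.Commensurable.of_powArc) (fun _ _ => PowerGraph.Commensurable.of_powArc)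
    (PowerGraph.classArcIso_apply hGtf hHtf f hGnil hHnil)
end

section
/- Let G be a torsion-free group in which every non-identity element lies in a unique maximal cyclic subgroup. Then for any group H, every graph isomorphism f : P(G) → P(H) is also an isomorphism of directed power graphs, i.e. for all x, y ∈ G there is an arc x → y in the directed power graph of G if and only if there is an arc f(x) → f(y) in the directed power graph of H. -/
/-- A maximal cyclic subgroup: a cyclic subgroup not properly contained in any
cyclic subgroup. -/
def IsMaxCyclic {G : Type*} [Group G] (C : Subgroup G) : Prop :=
  IsCyclic C ∧ ∀ D : Subgroup G, IsCyclic D → C ≤ D → C = D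

namespace SimpleGraph

def closedNeighborSet {V : Type*} (Γ : SimpleGraph V) (v : V) : Set V :=
  insert v (Γ.neighborSet v)

variable {V W : Type*} {Γ : SimpleGraph V} {Γ' : SimpleGraph W}

theorem Iso.image_closedNeighborSet (f : Γ ≃g Γ') (v : V) :
    f '' Γ.closedNeighborSet v = Γ'.closedNeighborSet (f v) := by
  rw [closedNeighborSet, Set.image_insert_eq, f.image_neighborSet, closedNeighborSet]

theorem Iso.isIsolated_apply_iff (f : Γ ≃g Γ') {v : V} :
    Γ'.IsIsolated (f v) ↔ Γ.IsIsolated v := by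
  simp only [IsIsolated, f.surjective.forall, f.map_adj_iff]

end SimpleGraph

open SimpleGraph

section PowerGraph

variable {K : Type*} [Group K] {u x y z : K}

theorem powerGraph_adj_iff_powArc : (powerGraph K).Adj x y ↔ powArc x y ∨ powArc y x := by
  simp only [powerGraph, powArc, ne_comm (a := y)]
  constructor
  · rintro ⟨hxy, n, hn, h | h⟩
    exacts [Or.inl ⟨hxy, n, hn, h⟩, Or.inr ⟨hxy, n, hn, h⟩]
  · rintro (⟨hxy, n, hn, h⟩ | ⟨hxy, n, hn, h⟩)
    exacts [⟨hxy, n, hn, Or.inl h⟩, ⟨hxy, n, hn, Or.inr h⟩]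

theorem powArc.adj (h : powArc x y) : (powerGraph K).Adj x y :=
  powerGraph_adj_iff_powArc.mpr (Or.inl h)

theorem powArc.ne_one (h : powArc x y) : x ≠ 1 := by
  rintro rfl
  obtain ⟨hne, n, -, rfl⟩ := h
  exact hne (one_zpow n).symm

theorem powerGraph_adj_one_iff : (powerGraph K).Adj 1 z ↔ z ≠ 1 ∧ IsOfFinOrder z := by
  simp only [powerGraph, one_zpow, isOfFinOrder_iff_zpow_eq_one, ne_comm (a := (1 : K))]
  constructor
  · rintro ⟨hz, n, hn, h | h⟩
    exacts [absurd h hz, ⟨hz, n, hn, h.symm⟩]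
  · rintro ⟨hz, n, hn, h⟩
    exact ⟨hz, n, hn, Or.inr h.symm⟩

theorem powerGraph_isIsolated_one_iff :
    (powerGraph K).IsIsolated 1 ↔ ∀ g : K, g ≠ 1 → ¬ IsOfFinOrder g := by
  simp only [IsIsolated, powerGraph_adj_one_iff, not_and]

theorem eq_one_of_powerGraph_isIsolated (h : (powerGraph K).IsIsolated u) : u = 1 := by
  by_contra hu
  refine h (u ^ (2 : ℤ)) ⟨fun h2 => hu ?_, 2, two_ne_zero, Or.inl rfl⟩
  rwa [zpow_two, left_eq_mul] at h2

theorem powerGraph_mem_closedNeighborSet_iff :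
    z ∈ (powerGraph K).closedNeighborSet u ↔ ∃ n : ℤ, n ≠ 0 ∧ (z = u ^ n ∨ u = z ^ n) := by
  simp only [closedNeighborSet, Set.mem_insert_iff, mem_neighborSet, powerGraph]
  constructor
  · rintro (rfl | ⟨-, h⟩)
    exacts [⟨1, one_ne_zero, Or.inl (zpow_one z).symm⟩, h]
  · intro h
    by_cases hz : z = u
    exacts [Or.inl hz, Or.inr ⟨Ne.symm hz, h⟩]

theorem powerGraph_closedNeighborSet_inv (u : K) :
    (powerGraph K).closedNeighborSet u⁻¹ = (powerGraph K).closedNeighborSet u := by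
  ext z
  simp only [powerGraph_mem_closedNeighborSet_iff, inv_zpow', inv_eq_iff_eq_inv, ← zpow_neg]
  constructor <;> rintro ⟨n, hn, h⟩ <;>
    exact ⟨-n, neg_ne_zero.mpr hn, by simpa only [neg_neg] using h⟩

end PowerGraph

section TorsionFree

variable {K : Type*} [Group K] (hK : ∀ g : K, g ≠ 1 → ¬ IsOfFinOrder g) {u v : K}
include hK

theorem infinite_closedNeighborSet_sdiff_zpow (hu : u ≠ 1) {m : ℤ} (hm : 2 ≤ m.natAbs) :
    ((powerGraph K).closedNeighborSet u \ (powerGraph K).closedNeighborSet (u ^ m)).Infinite := by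
  have hinj : Function.Injective (u ^ · : ℤ → K) :=
    injective_zpow_iff_not_isOfFinOrder.mpr (hK u hu)
  have hprimes : {p : ℕ | p.Prime ∧ m.natAbs < p}.Infinite := by
    refine Set.infinite_of_forall_exists_gt fun n => ?_
    obtain ⟨p, hp, hprime⟩ := Nat.exists_infinite_primes (max n m.natAbs + 1)
    exact ⟨p, ⟨hprime, by omega⟩, by omega⟩
  refine (hprimes.image fun p _ q _ h => Nat.cast_injective (hinj h)).mono ?_
  rintro _ ⟨p, ⟨hp, hmp⟩, rfl⟩
  simp only [Set.mem_sdiff, powerGraph_mem_closedNeighborSet_iff, ← zpow_mul]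
  refine ⟨⟨p, by exact_mod_cast hp.ne_zero, Or.inl rfl⟩, ?_⟩
  rintro ⟨k, -, h | h⟩
  · -- `p = m * k` with `1 < |m| < p`
    have hdvd : m.natAbs ∣ p := Int.natAbs_dvd_natAbs.mpr (Dvd.intro k (hinj h).symm)
    rcases hp.eq_one_or_self_of_dvd _ hdvd with h1 | h1 <;> omega
  · -- `m = p * k` with `m ≠ 0`
    have hdvd : p ∣ m.natAbs := Int.natAbs_dvd_natAbs.mpr (Dvd.intro k (hinj h).symm)
    have := Nat.le_of_dvd (by omega) hdvd
    omega

theorem powArc_of_adj_of_finite_sdiff (hadj : (powerGraph K).Adj u v)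
    (hfin : ((powerGraph K).closedNeighborSet v \ (powerGraph K).closedNeighborSet u).Finite) :
    powArc u v := by
  rcases powerGraph_adj_iff_powArc.mp hadj with huv | hvu
  · exact huv
  obtain ⟨hne, n, hn, rfl⟩ := hvu
  obtain rfl | rfl | hn2 : n = 1 ∨ n = -1 ∨ 2 ≤ n.natAbs := by omega
  · exact absurd (zpow_one v).symm hne
  · exact ⟨hne.symm, -1, by norm_num, by rw [← zpow_mul]; norm_num⟩
  · have hv : v ≠ 1 := powArc.ne_one ⟨hne, n, hn, rfl⟩
    exact absurd hfin (infinite_closedNeighborSet_sdiff_zpow hK hv hn2)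

theorem eq_inv_of_powArc_of_powArc (huv : powArc u v) (hvu : powArc v u) : v = u⁻¹ := by
  have hinj := injective_zpow_iff_not_isOfFinOrder.mpr (hK u huv.ne_one)
  obtain ⟨hne, a, -, rfl⟩ := huv
  obtain ⟨-, b, -, hb⟩ := hvu
  have hab : a * b = 1 := hinj (by simp only [zpow_mul, ← hb, zpow_one])
  rcases Int.mul_eq_one_iff_eq_one_or_neg_one.mp hab with ⟨rfl, -⟩ | ⟨rfl, -⟩
  · exact absurd (zpow_one u).symm hne
  · exact zpow_neg_one u

end TorsionFree

theorem finite_setOf_mem_zpowers_zpow_eq {K : Type*} [Group K] {c : K} (hc : ¬ IsOfFinOrder c)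
    {b : ℤ} (hb : b ≠ 0) :
    {z | z ∈ Subgroup.zpowers c ∧ ∃ k : ℤ, z ^ k = c ^ b}.Finite := by
  have hinj : Function.Injective (c ^ · : ℤ → K) := injective_zpow_iff_not_isOfFinOrder.mpr hc
  refine ((b.divisors : Set ℤ).toFinite.image (c ^ ·)).subset ?_
  rintro _ ⟨⟨d, rfl⟩, k, hk⟩
  refine ⟨d, Int.mem_divisors.mpr ⟨Dvd.intro k (hinj ?_), hb⟩, rfl⟩
  simpa only [zpow_mul] using hk

section UniqueMaxCyclic

variable {G : Type*} [Group G] (hGtf : ∀ g : G, g ≠ 1 → ¬ IsOfFinOrder g)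
  (hG : ∀ g : G, g ≠ 1 → ∃! C : Subgroup G, IsMaxCyclic C ∧ g ∈ C)

include hG in
theorem mem_of_zpow_mem_maxCyclic {C : Subgroup G} (hC : IsMaxCyclic C) {z : G} {k : ℤ}
    (hz : z ^ k ≠ 1) (hzC : z ^ k ∈ C) : z ∈ C := by
  have hz1 : z ≠ 1 := by rintro rfl; exact hz (one_zpow k)
  obtain ⟨D, ⟨hD, hzD⟩, -⟩ := hG z hz1
  have hDC : D = C := (hG _ hz).unique ⟨hD, zpow_mem hzD k⟩ ⟨hC, hzC⟩
  exact hDC ▸ hzD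

include hGtf hG

theorem finite_setOf_zpow_eq {y : G} (hy : y ≠ 1) :
    {z : G | ∃ k : ℤ, k ≠ 0 ∧ y = z ^ k}.Finite := by
  obtain ⟨C, ⟨hC, hyC⟩, -⟩ := hG y hy
  obtain ⟨c, rfl⟩ := (C.isCyclic_iff_exists_zpowers_eq_top).mp hC.1
  obtain ⟨b, rfl⟩ := Subgroup.mem_zpowers_iff.mp hyC
  have hc : c ≠ 1 := by rintro rfl; exact hy (one_zpow b)
  have hb : b ≠ 0 := by rintro rfl; exact hy (zpow_zero c)
  refine (finite_setOf_mem_zpowers_zpow_eq (hGtf c hc) hb).subset ?_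
  rintro z ⟨k, -, hzk⟩
  exact ⟨mem_of_zpow_mem_maxCyclic hG hC (hzk ▸ hy) (hzk ▸ hyC), k, hzk.symm⟩

theorem finite_closedNeighborSet_sdiff_of_powArc {x y : G} (hxy : powArc x y) :
    ((powerGraph G).closedNeighborSet y \ (powerGraph G).closedNeighborSet x).Finite := by
  have hx := hxy.ne_one
  obtain ⟨-, n, hn, rfl⟩ := hxy
  have hy : x ^ n ≠ 1 := fun h => hGtf x hx (isOfFinOrder_iff_zpow_eq_one.mpr ⟨n, hn, h⟩)
  refine (finite_setOf_zpow_eq hGtf hG hy).subset ?_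
  rintro z ⟨hzy, hzx⟩
  obtain ⟨k, hk, rfl | h⟩ := powerGraph_mem_closedNeighborSet_iff.mp hzy
  · exact absurd (powerGraph_mem_closedNeighborSet_iff.mpr
      ⟨n * k, mul_ne_zero hn hk, Or.inl (zpow_mul x n k).symm⟩) hzx
  · exact ⟨k, hk, h⟩

end UniqueMaxCyclic

theorem torsionFree_of_powerGraph_iso {G H : Type*} [Group G] [Group H]
    (hG : ∀ g : G, g ≠ 1 → ¬ IsOfFinOrder g) (f : powerGraph G ≃g powerGraph H) :
    ∀ h : H, h ≠ 1 → ¬ IsOfFinOrder h := by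
  have hiso : (powerGraph H).IsIsolated (f 1) :=
    f.isIsolated_apply_iff.mpr (powerGraph_isIsolated_one_iff.mpr hG)
  rw [← powerGraph_isIsolated_one_iff, ← eq_one_of_powerGraph_isIsolated hiso]
  exact hiso

/-- If `G` is a torsion-free group in which every non-identity element lies in a
unique maximal cyclic subgroup, then every power graph isomorphism from `P(G)` to
`P(H)` is an isomorphism of directed power graphs. -/
theorem stmt_2 (G H : Type*) [Group G] [Group H]
    (hGtf : ∀ g : G, g ≠ 1 → ¬ IsOfFinOrder g)
    (hG : ∀ g : G, g ≠ 1 → ∃! C : Subgroup G, IsMaxCyclic C ∧ g ∈ C)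
    (f : powerGraph G ≃g powerGraph H) :
    ∀ x y : G, powArc x y ↔ powArc (f x) (f y) := by
  have hH := torsionFree_of_powerGraph_iso hGtf f
  have image_sdiff (x y : G) :
      f '' ((powerGraph G).closedNeighborSet y \ (powerGraph G).closedNeighborSet x) =
        (powerGraph H).closedNeighborSet (f y) \ (powerGraph H).closedNeighborSet (f x) := by
    rw [Set.image_sdiff f.injective, f.image_closedNeighborSet, f.image_closedNeighborSet]
  have forward (x y : G) (hxy : powArc x y) : powArc (f x) (f y) :=
    powArc_of_adj_of_finite_sdiff hH (f.map_adj_iff.mpr hxy.adj)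
      (image_sdiff x y ▸ (finite_closedNeighborSet_sdiff_of_powArc hGtf hG hxy).image f)
  refine fun x y => ⟨forward x y, fun hfxy => ?_⟩
  have hadj : (powerGraph G).Adj x y := f.map_adj_iff.mp hfxy.adj
  refine powArc_of_adj_of_finite_sdiff hGtf hadj ?_
  rcases powerGraph_adj_iff_powArc.mp hadj with hxy | hyx
  · exact finite_closedNeighborSet_sdiff_of_powArc hGtf hG hxy
  · have hinv : f y = (f x)⁻¹ := eq_inv_of_powArc_of_powArc hH hfxy (forward y x hyx)
    have hN : (powerGraph G).closedNeighborSet y = (powerGraph G).closedNeighborSet x :=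
      (Set.image_injective.mpr f.injective) (by
        rw [f.image_closedNeighborSet, f.image_closedNeighborSet, hinv,
          powerGraph_closedNeighborSet_inv])
    rw [hN, sdiff_self]
    exact Set.finite_empty
end

section
/- Let H be a group such that the power graph P(H) is isomorphic to the power graph P(ℚ) of the additive group of rational numbers. Then the directed power graphs of ℚ and H are isomorphic. Moreover, every graph isomorphism f : P(ℚ) → P(H) either preserves all orientations (for all x, y ∈ ℚ, an arc x → y in the directed power graph of ℚ implies an arc f(x) → f(y) in that of H) or reverses all orientations (for all x, y ∈ ℚ, an arc x → y implies an arc f(y) → f(x)). -/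
/-- The power graph of an additive group `G`: distinct `x, y` are adjacent iff
one is a nonzero integer multiple of the other. -/
def addPowerGraph (G : Type*) [AddGroup G] : SimpleGraph G where
  Adj x y := x ≠ y ∧ ∃ n : ℤ, n ≠ 0 ∧ (y = n • x ∨ x = n • y)
  symm := by
    constructor
    rintro x y ⟨hxy, n, hn, h⟩
    exact ⟨hxy.symm, n, hn, h.symm⟩
  loopless := by constructor; rintro x ⟨h, -⟩; exact h rfl

/-- There is an arc `x → y` in the directed power graph of an additive group iff
`x ≠ y` and `y` is a nonzero integer multiple of `x`. -/
def addPowArc {G : Type*} [AddGroup G] (x y : G) : Prop :=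
  x ≠ y ∧ ∃ n : ℤ, n ≠ 0 ∧ y = n • x

/-!
An isomorphism `f : P(ℚ) → P(H)` sends the isolated vertex `0` to an isolated vertex, which can
only be `1`; hence `H` is torsion-free. In a torsion-free group two adjacent vertices with the same
other neighbours are mutually inverse, so `f (-x) = (f x)⁻¹`.

Pulling the arcs of `H` back along `f` gives a relation `R` on `ℚ` that orients every edge and
such that the ends of every directed 2-path are adjacent. Two arcs of `ℚ` with a common tail, or a
common head, and non-adjacent other ends are therefore oriented alike by `R`. Such moves connect
any two arcs `t → n • t` with `|n| ≥ 2` (through multipliers and base points built from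
`|m| |n| + 1`), so `R` either contains or reverses every arc of `ℚ`. Finally `x ↦ x⁻¹` is an
automorphism of `P(ℚ)` reversing all arcs, which turns a reversing `f` into a preserving one.
-/

lemma Int.one_lt_natAbs_of_not_dvd {m k : ℤ} (hmk : ¬m ∣ k) (hkm : ¬k ∣ m) : 1 < k.natAbs := by
  have hk0 : k ≠ 0 := by rintro rfl; exact hmk (dvd_zero m)
  have hk1 : k.natAbs ≠ 1 := fun h => hkm (Int.natAbs_dvd_natAbs.1 (h ▸ one_dvd _))
  omega

/-- `|m| |n| + 1` is coprime to `m` and `n` and larger than both. -/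
lemma Int.exists_not_dvd_and_not_dvd {m n : ℤ} (hm : 1 < m.natAbs) (hn : 1 < n.natAbs) :
    ∃ k : ℤ, ¬m ∣ k ∧ ¬k ∣ m ∧ ¬n ∣ k ∧ ¬k ∣ n := by
  have key : ∀ a b : ℕ, 1 < a → 1 < b → ¬a ∣ a * b + 1 ∧ ¬a * b + 1 ∣ a := by
    intro a b ha hb
    refine ⟨fun h => ?_, fun h => ?_⟩
    · have := Nat.le_of_dvd one_pos ((Nat.dvd_add_right (dvd_mul_right a b)).1 h)
      omega
    · have := Nat.le_of_dvd (by omega) h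
      nlinarith
  obtain ⟨h1, h2⟩ := key _ _ hm hn
  obtain ⟨h3, h4⟩ := key _ _ hn hm
  rw [mul_comm] at h3 h4
  refine ⟨(m.natAbs * n.natAbs + 1 : ℕ), ?_, ?_, ?_, ?_⟩ <;>
    simpa only [← Int.natAbs_dvd_natAbs, Int.natAbs_natCast]

namespace SimpleGraph

/-- Unlike an orientation in the usual sense, `R` may hold both ways along an edge, as the arcs
`a → a⁻¹ → a` of a power graph do. -/
structure IsQuasiTransitiveOrientation {V : Type*} (Γ : SimpleGraph V) (R : V → V → Prop) :
    Prop where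
  orient ⦃x y : V⦄ : Γ.Adj x y → R x y ∨ R y x
  adj_of_rel_of_rel ⦃x y z : V⦄ : R x y → R y z → x ≠ z → Γ.Adj x z

namespace IsQuasiTransitiveOrientation

variable {V W : Type*} {Γ : SimpleGraph V} {Γ' : SimpleGraph W} {R : V → V → Prop}

lemma swap (hR : Γ.IsQuasiTransitiveOrientation R) :
    Γ.IsQuasiTransitiveOrientation (fun x y => R y x) where
  orient _ _ h := (hR.orient h).symm
  adj_of_rel_of_rel _ _ _ hxy hyz hxz := (hR.adj_of_rel_of_rel hyz hxy hxz.symm).symm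

lemma comap {R : W → W → Prop} (f : Γ ≃g Γ') (hR : Γ'.IsQuasiTransitiveOrientation R) :
    Γ.IsQuasiTransitiveOrientation (fun x y => R (f x) (f y)) where
  orient _ _ h := hR.orient (f.map_adj_iff.2 h)
  adj_of_rel_of_rel _ _ _ hxy hyz hxz :=
    f.map_adj_iff.1 (hR.adj_of_rel_of_rel hxy hyz (f.injective.ne hxz))

variable (hR : Γ.IsQuasiTransitiveOrientation R)
include hR

lemma rel_right_of_not_adj {x y z : V} (hyx : R y x) (hyz : Γ.Adj y z) (hxz : ¬Γ.Adj x z) :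
    R y z := by
  obtain rfl | hne := eq_or_ne x z
  · exact hyx
  refine (hR.orient hyz).resolve_right fun hzy => hxz ?_
  exact (hR.adj_of_rel_of_rel hzy hyx hne.symm).symm

lemma rel_left_of_not_adj {x y z : V} (hxy : R x y) (hzy : Γ.Adj z y) (hxz : ¬Γ.Adj x z) :
    R z y := by
  obtain rfl | hne := eq_or_ne x z
  · exact hxy
  exact (hR.orient hzy).resolve_right fun hyz => hxz (hR.adj_of_rel_of_rel hxy hyz hne)

end IsQuasiTransitiveOrientation

end SimpleGraph

section PowerGraph

variable {G : Type*} [Group G] {a b c : G}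

lemma powerGraph_adj_iff_powArc_s3 : (powerGraph G).Adj a b ↔ powArc a b ∨ powArc b a := by
  constructor
  · rintro ⟨hab, n, hn, h | h⟩
    · exact .inl ⟨hab, n, hn, h⟩
    · exact .inr ⟨hab.symm, n, hn, h⟩
  · rintro (⟨hab, n, hn, h⟩ | ⟨hba, n, hn, h⟩)
    · exact ⟨hab, n, hn, .inl h⟩
    · exact ⟨hba.symm, n, hn, .inr h⟩

lemma isQuasiTransitiveOrientation_powArc :
    (powerGraph G).IsQuasiTransitiveOrientation powArc where
  orient _ _ := powerGraph_adj_iff_powArc_s3.1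
  adj_of_rel_of_rel _ _ _ := fun ⟨_, m, hm, hy⟩ ⟨_, n, hn, hz⟩ hxz =>
    ⟨hxz, m * n, mul_ne_zero hm hn, .inl (by rw [hz, hy, zpow_mul])⟩

lemma powArc_inv (h : a ≠ a⁻¹) : powArc a a⁻¹ :=
  ⟨h, -1, by norm_num, (zpow_neg_one a).symm⟩

lemma powerGraph_adj_inv_iff (hca : c ≠ a) (hca' : c ≠ a⁻¹) :
    (powerGraph G).Adj c a ↔ (powerGraph G).Adj c a⁻¹ := by
  have key : ∀ {a : G}, c ≠ a⁻¹ → (powerGraph G).Adj c a → (powerGraph G).Adj c a⁻¹ := by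
    rintro a hca' ⟨-, n, hn, h | h⟩
    · exact ⟨hca', -n, neg_ne_zero.2 hn, .inl (by rw [zpow_neg, h])⟩
    · exact ⟨hca', -n, neg_ne_zero.2 hn, .inr (by rw [zpow_neg, inv_zpow, inv_inv, h])⟩
  exact ⟨key hca', fun h => inv_inv a ▸ key (by rwa [inv_inv]) h⟩

lemma eq_one_of_forall_not_adj (h : ∀ b, ¬(powerGraph G).Adj a b) : a = 1 := by
  by_contra ha
  refine h (a ^ (2 : ℤ)) ⟨fun h' => ha ?_, 2, two_ne_zero, .inl rfl⟩
  rwa [zpow_two, left_eq_mul] at h'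

lemma forall_not_adj_one_iff :
    (∀ b, ¬(powerGraph G).Adj 1 b) ↔ ∀ a : G, a ≠ 1 → ¬IsOfFinOrder a := by
  simp only [isOfFinOrder_iff_zpow_eq_one]
  constructor
  · rintro h a ha ⟨n, hn, han⟩
    exact h a ⟨ha.symm, n, hn, .inr han.symm⟩
  · rintro h b ⟨hb, n, hn, h' | h'⟩
    · exact hb (by rw [h', one_zpow])
    · exact h b hb.symm ⟨n, hn, h'.symm⟩

end PowerGraph

section TorsionFree

variable {G : Type*} [Group G] (hG : ∀ a : G, a ≠ 1 → ¬IsOfFinOrder a) {a b : G}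
include hG

lemma zpow_right_inj_of_ne_one (ha : a ≠ 1) {m n : ℤ} : a ^ m = a ^ n ↔ m = n :=
  (injective_zpow_iff_not_isOfFinOrder.2 (hG a ha)).eq_iff

lemma zpow_ne_one_of_ne_one (ha : a ≠ 1) {n : ℤ} (hn : n ≠ 0) : a ^ n ≠ 1 := by
  rwa [← zpow_zero a, Ne, zpow_right_inj_of_ne_one hG ha]

lemma self_ne_inv_of_ne_one (ha : a ≠ 1) : a ≠ a⁻¹ := by
  rw [← zpow_neg_one, Ne, ← zpow_one a, ← zpow_mul, zpow_right_inj_of_ne_one hG ha]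
  norm_num

lemma powerGraph_adj_zpow (ha : a ≠ 1) {n : ℤ} (hn : 1 < n.natAbs) :
    (powerGraph G).Adj a (a ^ n) := by
  refine ⟨?_, n, by omega, .inl rfl⟩
  nth_rewrite 1 [← zpow_one a]
  rw [Ne, zpow_right_inj_of_ne_one hG ha]
  rintro rfl
  simp at hn

lemma not_adj_zpow_zpow (ha : a ≠ 1) {m n : ℤ} (hmn : ¬m ∣ n) (hnm : ¬n ∣ m) :
    ¬(powerGraph G).Adj (a ^ m) (a ^ n) := by
  rintro ⟨-, k, -, h | h⟩ <;> rw [← zpow_mul, zpow_right_inj_of_ne_one hG ha] at h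
  · exact hmn ⟨k, h⟩
  · exact hnm ⟨k, h⟩

lemma eq_inv_of_powArc_of_powArc_s3 (hab : powArc a b) (hba : powArc b a) : b = a⁻¹ := by
  obtain ⟨hne, n, -, rfl⟩ := hab
  obtain ⟨-, m, -, hm⟩ := hba
  have ha : a ≠ 1 := by rintro rfl; simp at hne
  have hnm : n * m = 1 :=
    ((zpow_right_inj_of_ne_one hG ha).1 (by rw [zpow_one, zpow_mul, ← hm])).symm
  rcases Int.eq_one_or_neg_one_of_mul_eq_one hnm with rfl | rfl
  · simp at hne
  · exact zpow_neg_one a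

/-- If `b = a ^ n` with `|n| ≥ 2`, then `a ^ m`, for `m` incomparable with `n` under divisibility,
is adjacent to `a` but not to `b`. -/
lemma eq_inv_of_powArc_of_forall_adj_iff (hab : powArc a b)
    (htwin : ∀ c, c ≠ a → c ≠ b → ((powerGraph G).Adj c a ↔ (powerGraph G).Adj c b)) :
    b = a⁻¹ := by
  obtain ⟨hne, n, hn0, rfl⟩ := hab
  have ha : a ≠ 1 := by rintro rfl; simp at hne
  by_contra hinv
  have hn : 1 < n.natAbs := by
    have hn1 : n ≠ 1 := by rintro rfl; simp at hne
    have hn1' : n ≠ -1 := by rintro rfl; simp at hinv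
    omega
  obtain ⟨m, hnm, hmn, -, -⟩ := Int.exists_not_dvd_and_not_dvd hn hn
  have hadj : (powerGraph G).Adj (a ^ m) a :=
    (powerGraph_adj_zpow hG ha (Int.one_lt_natAbs_of_not_dvd hnm hmn)).symm
  have hmb : a ^ m ≠ a ^ n := by
    rw [Ne, zpow_right_inj_of_ne_one hG ha]
    rintro rfl
    exact hnm dvd_rfl
  exact not_adj_zpow_zpow hG ha hmn hnm ((htwin _ hadj.ne hmb).1 hadj)

end TorsionFree

def HasCommonRoots (G : Type*) [Group G] : Prop :=
  ∀ a b : G, a ≠ 1 → b ≠ 1 →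
    ∃ s : G, ∃ m n : ℤ, 1 < m.natAbs ∧ 1 < n.natAbs ∧ a = s ^ m ∧ b = s ^ n

namespace SimpleGraph.IsQuasiTransitiveOrientation

variable {G : Type*} [Group G] (hG : ∀ a : G, a ≠ 1 → ¬IsOfFinOrder a) {R : G → G → Prop}
  (hR : (powerGraph G).IsQuasiTransitiveOrientation R)
include hG hR

lemma rel_zpow_of_not_dvd {a : G} (ha : a ≠ 1) {m k : ℤ} (hmk : ¬m ∣ k) (hkm : ¬k ∣ m)
    (h : R a (a ^ m)) : R a (a ^ k) :=
  hR.rel_right_of_not_adj h (powerGraph_adj_zpow hG ha (Int.one_lt_natAbs_of_not_dvd hmk hkm))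
    (not_adj_zpow_zpow hG ha hmk hkm)

lemma rel_zpow_of_rel_zpow {a : G} (ha : a ≠ 1) {m n : ℤ} (hm : 1 < m.natAbs)
    (hn : 1 < n.natAbs) (h : R a (a ^ m)) : R a (a ^ n) := by
  obtain ⟨k, hmk, hkm, hnk, hkn⟩ := Int.exists_not_dvd_and_not_dvd hm hn
  exact hR.rel_zpow_of_not_dvd hG ha hkn hnk (hR.rel_zpow_of_not_dvd hG ha hmk hkm h)

/-- The arcs `s ^ d → s ^ (c * d)` and `s ^ c → s ^ (c * d)` have non-adjacent tails. -/
lemma rel_zpow_zpow_of_not_dvd {s : G} (hs : s ≠ 1) {c d : ℤ} (hcd : ¬c ∣ d) (hdc : ¬d ∣ c)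
    (h : R (s ^ d) ((s ^ d) ^ c)) : R (s ^ c) ((s ^ c) ^ d) := by
  rw [← zpow_mul, mul_comm, zpow_mul] at h
  have hc := Int.one_lt_natAbs_of_not_dvd hdc hcd
  have hsc : s ^ c ≠ 1 := zpow_ne_one_of_ne_one hG hs (by omega)
  exact hR.rel_left_of_not_adj h
    (powerGraph_adj_zpow hG hsc (Int.one_lt_natAbs_of_not_dvd hcd hdc))
    (not_adj_zpow_zpow hG hs hdc hcd)

lemma rel_zpow_zpow_of_rel_zpow_zpow {s : G} (hs : s ≠ 1) {b c m n : ℤ} (hb : 1 < b.natAbs)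
    (hc : 1 < c.natAbs) (hm : 1 < m.natAbs) (hn : 1 < n.natAbs) (h : R (s ^ b) ((s ^ b) ^ m)) :
    R (s ^ c) ((s ^ c) ^ n) := by
  obtain ⟨N, hbN, hNb, hcN, hNc⟩ := Int.exists_not_dvd_and_not_dvd hb hc
  have hN := Int.one_lt_natAbs_of_not_dvd hbN hNb
  have hpow : ∀ {k : ℤ}, 1 < k.natAbs → s ^ k ≠ 1 := fun hk =>
    zpow_ne_one_of_ne_one hG hs (by omega)
  have h₁ : R (s ^ b) ((s ^ b) ^ N) := hR.rel_zpow_of_rel_zpow hG (hpow hb) hm hN h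
  have h₂ : R (s ^ N) ((s ^ N) ^ b) := hR.rel_zpow_zpow_of_not_dvd hG hs hNb hbN h₁
  have h₃ : R (s ^ N) ((s ^ N) ^ c) := hR.rel_zpow_of_rel_zpow hG (hpow hN) hb hc h₂
  have h₄ : R (s ^ c) ((s ^ c) ^ N) := hR.rel_zpow_zpow_of_not_dvd hG hs hcN hNc h₃
  exact hR.rel_zpow_of_rel_zpow hG (hpow hc) hN hn h₄

lemma rel_of_powArc (hroot : HasCommonRoots G) {a : G} (ha : a ≠ 1) {m : ℤ}
    (hm : 1 < m.natAbs) (h : R a (a ^ m)) (hinv : ∀ b : G, b ≠ 1 → R b b⁻¹) {x y : G}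
    (hxy : powArc x y) : R x y := by
  obtain ⟨hne, n, hn0, rfl⟩ := hxy
  have hx : x ≠ 1 := by rintro rfl; simp at hne
  obtain rfl | hn1 := eq_or_ne n (-1)
  · simpa using hinv x hx
  have hn : 1 < n.natAbs := by
    have : n ≠ 1 := by rintro rfl; simp at hne
    omega
  obtain ⟨s, p, q, hp, hq, rfl, rfl⟩ := hroot a x ha hx
  exact hR.rel_zpow_zpow_of_rel_zpow_zpow hG (by rintro rfl; simp at ha) hp hq hm hn h

end SimpleGraph.IsQuasiTransitiveOrientation

section PowerGraphIso

variable {G H : Type*} [Group G] [Group H] (hG : ∀ a : G, a ≠ 1 → ¬IsOfFinOrder a)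
  (f : powerGraph G ≃g powerGraph H)
include hG

lemma powerGraphIso_map_one : f 1 = 1 :=
  eq_one_of_forall_not_adj fun b hb =>
    forall_not_adj_one_iff.2 hG (f.symm b) (by simpa using f.symm.map_adj_iff.2 hb)

include f in
lemma not_isOfFinOrder_of_powerGraphIso : ∀ b : H, b ≠ 1 → ¬IsOfFinOrder b := by
  refine forall_not_adj_one_iff.1 fun b hb => forall_not_adj_one_iff.2 hG (f.symm b) ?_
  rw [← powerGraphIso_map_one hG f] at hb
  exact f.map_adj_iff.1 (by simpa using hb)

lemma powerGraphIso_map_inv (x : G) : f x⁻¹ = (f x)⁻¹ := by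
  obtain rfl | hx := eq_or_ne x 1
  · simp [powerGraphIso_map_one hG f]
  have hH := not_isOfFinOrder_of_powerGraphIso hG f
  have hadj : (powerGraph H).Adj (f x) (f x⁻¹) :=
    f.map_adj_iff.2 (powerGraph_adj_iff_powArc_s3.2 (.inl (powArc_inv (self_ne_inv_of_ne_one hG hx))))
  have htwin : ∀ c, c ≠ f x → c ≠ f x⁻¹ →
      ((powerGraph H).Adj c (f x) ↔ (powerGraph H).Adj c (f x⁻¹)) := by
    intro c hc hc'
    rw [← f.apply_symm_apply c, f.map_adj_iff, f.map_adj_iff]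
    exact powerGraph_adj_inv_iff (fun h => hc (by rw [← h, f.apply_symm_apply]))
      (fun h => hc' (by rw [← h, f.apply_symm_apply]))
  rcases powerGraph_adj_iff_powArc_s3.1 hadj with h | h
  · exact eq_inv_of_powArc_of_forall_adj_iff hH h htwin
  · exact inv_eq_iff_eq_inv.1
      (eq_inv_of_powArc_of_forall_adj_iff hH h fun c h₁ h₂ => (htwin c h₂ h₁).symm).symm

theorem powerGraphIso_preserves_or_reverses_powArc [Nontrivial G] (hroot : HasCommonRoots G) :
    (∀ x y, powArc x y → powArc (f x) (f y)) ∨ (∀ x y, powArc x y → powArc (f y) (f x)) := by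
  obtain ⟨a, ha⟩ := exists_ne (1 : G)
  have hR := isQuasiTransitiveOrientation_powArc.comap f
  have hinv : ∀ b : G, b ≠ 1 → powArc (f b) (f b⁻¹) := fun b hb => by
    have := f.injective.ne (self_ne_inv_of_ne_one hG hb)
    rw [powerGraphIso_map_inv hG f] at this ⊢
    exact powArc_inv this
  have h2 : 1 < (2 : ℤ).natAbs := by norm_num
  rcases hR.orient (powerGraph_adj_zpow hG ha h2) with h | h
  · exact .inl fun x y => hR.rel_of_powArc hG hroot ha h2 h hinv
  · refine .inr fun x y => hR.swap.rel_of_powArc hG hroot ha h2 h fun b hb => ?_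
    simpa using hinv b⁻¹ (inv_ne_one.2 hb)

lemma powArc_iff_of_forall_powArc (hf : ∀ x y, powArc x y → powArc (f x) (f y)) (x y : G) :
    powArc x y ↔ powArc (f x) (f y) := by
  refine ⟨hf x y, fun h => ?_⟩
  rcases powerGraph_adj_iff_powArc_s3.1 (f.map_adj_iff.1 (powerGraph_adj_iff_powArc_s3.2 (.inl h)))
    with hxy | hyx
  · exact hxy
  have hfx : f x = f y⁻¹ := by
    rw [powerGraphIso_map_inv hG f]
    exact eq_inv_of_powArc_of_powArc_s3 (not_isOfFinOrder_of_powerGraphIso hG f) (hf y x hyx) h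
  obtain rfl := f.injective hfx
  simpa using powArc_inv (a := y⁻¹) (by simpa using hyx.1.symm)

end PowerGraphIso

/- `addPowerGraph ℚ` and `addPowArc` on `ℚ` are definitionally `powerGraph` and `powArc` on
`Multiplicative ℚ`, so the results above apply to `ℚ` as they stand. -/

namespace Rat

lemma not_isOfFinOrder_multiplicative : ∀ a : Multiplicative ℚ, a ≠ 1 → ¬IsOfFinOrder a :=
  fun _ => not_isOfFinOrder_of_isMulTorsionFree

lemma eq_zsmul_inv_two_mul_den_mul_den (x y : ℚ) :
    x = (2 * x.num * y.den : ℤ) • (2 * x.den * y.den : ℚ)⁻¹ := by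
  nth_rewrite 1 [← num_div_den x]
  rw [zsmul_eq_mul]
  push_cast
  field_simp

lemma one_lt_natAbs_two_mul_num_mul_den {x : ℚ} (hx : x ≠ 0) (y : ℚ) :
    1 < (2 * x.num * y.den).natAbs := by
  have := Int.natAbs_pos.2 (num_ne_zero.2 hx)
  have := y.den_pos
  simp only [Int.natAbs_mul, Int.natAbs_natCast]
  norm_num
  nlinarith

lemma hasCommonRoots_multiplicative : HasCommonRoots (Multiplicative ℚ) := by
  intro a b ha hb
  obtain ⟨x, rfl⟩ : ∃ x : ℚ, Multiplicative.ofAdd x = a := ⟨a.toAdd, rfl⟩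
  obtain ⟨y, rfl⟩ : ∃ y : ℚ, Multiplicative.ofAdd y = b := ⟨b.toAdd, rfl⟩
  rw [Ne, ofAdd_eq_one] at ha hb
  refine ⟨.ofAdd (2 * x.den * y.den : ℚ)⁻¹, 2 * x.num * y.den, 2 * y.num * x.den,
    one_lt_natAbs_two_mul_num_mul_den ha y, one_lt_natAbs_two_mul_num_mul_den hb x, ?_, ?_⟩ <;>
    rw [← ofAdd_zsmul, Multiplicative.ofAdd.apply_eq_iff_eq]
  · exact eq_zsmul_inv_two_mul_den_mul_den x y
  · rw [mul_right_comm (2 : ℚ)]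
    exact eq_zsmul_inv_two_mul_den_mul_den y x

lemma addPowArc_inv_inv {x y : ℚ} (h : addPowArc x y) : addPowArc y⁻¹ x⁻¹ := by
  obtain ⟨hne, n, hn, rfl⟩ := h
  refine ⟨fun h => hne (inv_injective h).symm, n, hn, ?_⟩
  have : (n : ℚ) ≠ 0 := Int.cast_ne_zero.2 hn
  rw [zsmul_eq_mul, zsmul_eq_mul, mul_inv, mul_inv_cancel_left₀ this]

def invPowerGraphIso : addPowerGraph ℚ ≃g addPowerGraph ℚ where
  toEquiv := Equiv.inv ℚ
  map_rel_iff' := by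
    have adj_iff : ∀ {x y : ℚ}, (addPowerGraph ℚ).Adj x y ↔ addPowArc x y ∨ addPowArc y x :=
      powerGraph_adj_iff_powArc_s3 (G := Multiplicative ℚ)
    have key : ∀ {x y : ℚ}, (addPowerGraph ℚ).Adj x y → (addPowerGraph ℚ).Adj x⁻¹ y⁻¹ :=
      fun h => adj_iff.2 ((adj_iff.1 h).symm.imp addPowArc_inv_inv addPowArc_inv_inv)
    exact fun {x y} => ⟨fun h => by simpa using key h, key⟩

end Rat

/-- If the power graph of a group `H` is isomorphic to the power graph of `ℚ`,
then their directed power graphs are isomorphic; moreover every power graph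
isomorphism `f : P(ℚ) → P(H)` preserves all orientations or reverses all
orientations. -/
theorem stmt_3 (H : Type*) [Group H]
    (h : Nonempty (addPowerGraph ℚ ≃g powerGraph H)) :
    (∃ e : ℚ ≃ H, ∀ x y : ℚ, addPowArc x y ↔ powArc (e x) (e y)) ∧
      ∀ f : addPowerGraph ℚ ≃g powerGraph H,
        (∀ x y : ℚ, addPowArc x y → powArc (f x) (f y)) ∨
        (∀ x y : ℚ, addPowArc x y → powArc (f y) (f x)) := by
  have hℚ := Rat.not_isOfFinOrder_multiplicative
  have dichotomy (f : addPowerGraph ℚ ≃g powerGraph H) :=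
    powerGraphIso_preserves_or_reverses_powArc (G := Multiplicative ℚ) hℚ f
      Rat.hasCommonRoots_multiplicative
  refine ⟨?_, dichotomy⟩
  obtain ⟨f⟩ := h
  rcases dichotomy f with hf | hf
  · exact ⟨f.toEquiv, powArc_iff_of_forall_powArc (G := Multiplicative ℚ) hℚ f hf⟩
  · let g := Rat.invPowerGraphIso.trans f
    exact ⟨g.toEquiv, powArc_iff_of_forall_powArc (G := Multiplicative ℚ) hℚ g
      fun x y hxy => hf _ _ (Rat.addPowArc_inv_inv hxy)⟩
end

section
/- Let G be a torsion-free group, H a group, and f : P(G) → P(H) a graph isomorphism. Let z ∈ G with z ≠ 1. Then the subgraph of P(G) induced on the in-neighbourhood I_G(z) is isomorphic to the subgraph of P(H) induced on I_H(f(z)), and the subgraph of P(G) induced on the out-neighbourhood O_G(z) is isomorphic to the subgraph of P(H) induced on O_H(f(z)). -/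
/-- The out-neighbourhood of `x` in the directed power graph. -/
def outSet {G : Type*} [Group G] (x : G) : Set G := {y | powArc x y}

/-- The in-neighbourhood of `x` in the directed power graph. -/
def inSet {G : Type*} [Group G] (x : G) : Set G := {y | powArc y x}

/-!
Every `z ≠ 1` in a torsion-free group has infinite order, and for `u` of infinite order
`b ↦ u ^ b` identifies the out-neighbourhood `O(u)` with `{b : ℤ | b ≠ 0, 1}` under the
divisibility graph. So `O_G(z) ≅ O_H(f z)` as soon as `f z` has infinite order. It does: an
element of infinite order has exactly one closed twin, `u⁻¹`, while a finite-order element with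
a unique closed twin has order at most `6`, since all generators of `⟨h⟩` are closed twins of
`h`. The clique `{z ^ 2 ^ i}` would then be mapped to a clique of such elements, but a clique of
elements of finite order `≤ 6` lies in one cyclic group of order `≤ 6`.

The neighbourhood of `u` is the join of `A(u) = O(u) \ {u⁻¹}` and `I(u)`, and any two elements
of `A(u)` have a common non-neighbour in `A(u)`, namely a large prime power of `u`. Hence `f`
maps `A(z)` either into `A(f z)` or into `I(f z)`. In the first case it restricts to
`I(z) ≅ I(f z)`; in the second, `I(z)` and `I(f z)` are joins of copies of `A(z) ≅ A(f z)` with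
the same remaining part.
-/

namespace SimpleGraph

variable {α β : Type*} {Γ : SimpleGraph α} {Δ : SimpleGraph β}

def IsClosedTwin (Γ : SimpleGraph α) (x w : α) : Prop :=
  Γ.Adj x w ∧ ∀ t, t ≠ x → t ≠ w → (Γ.Adj x t ↔ Γ.Adj w t)

lemma IsClosedTwin.symm {x w : α} (h : Γ.IsClosedTwin x w) : Γ.IsClosedTwin w x :=
  ⟨h.1.symm, fun t htw htx => (h.2 t htx htw).symm⟩

lemma IsClosedTwin.map (φ : Γ ≃g Δ) {x w : α} (h : Γ.IsClosedTwin x w) :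
    Δ.IsClosedTwin (φ x) (φ w) := by
  refine ⟨φ.map_adj_iff.2 h.1, fun t htx htw => ?_⟩
  obtain ⟨t, rfl⟩ := φ.surjective t
  rw [φ.map_adj_iff, φ.map_adj_iff]
  exact h.2 t (ne_of_apply_ne φ htx) (ne_of_apply_ne φ htw)

def HasCommonNonNeighbor (Γ : SimpleGraph α) (s : Set α) : Prop :=
  ∀ x ∈ s, ∀ y ∈ s, ∃ m ∈ s, ¬Γ.Adj x m ∧ ¬Γ.Adj m y

lemma mapsTo_or_mapsTo_of_isCompleteBetween (φ : Γ ≃g Δ) {A : Set α} {A' B' : Set β}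
    (hφ : Set.MapsTo φ A (A' ∪ B')) (hAB' : Δ.IsCompleteBetween A' B')
    (hA : Γ.HasCommonNonNeighbor A) : Set.MapsTo φ A A' ∨ Set.MapsTo φ A B' := by
  by_contra! h
  simp only [Set.MapsTo, not_forall] at h
  obtain ⟨⟨x, hx, hxA'⟩, ⟨y, hy, hyB'⟩⟩ := h
  have hxB' : φ x ∈ B' := (hφ hx).resolve_left hxA'
  have hyA' : φ y ∈ A' := (hφ hy).resolve_right hyB'
  obtain ⟨m, hm, hxm, hmy⟩ := hA x hx y hy
  rcases hφ hm with hmA' | hmB'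
  · exact hxm (φ.map_adj_iff.1 (hAB' hmA' hxB').symm)
  · exact hmy (φ.map_adj_iff.1 (hAB' hyA' hmB').symm)

noncomputable def Iso.induceUnion {X Y : Set α} {X' Y' : Set β}
    (hXY : Γ.IsCompleteBetween X Y) (hXY' : Δ.IsCompleteBetween X' Y')
    (e₁ : Γ.induce X ≃g Δ.induce X') (e₂ : Γ.induce Y ≃g Δ.induce Y') :
    Γ.induce (X ∪ Y) ≃g Δ.induce (X' ∪ Y') := by
  classical
  refine ⟨(Equiv.Set.union hXY.disjoint).trans
    ((e₁.toEquiv.sumCongr e₂.toEquiv).trans (Equiv.Set.union hXY'.disjoint).symm), ?_⟩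
  intro a b
  obtain ⟨u, rfl⟩ := (Equiv.Set.union hXY.disjoint).symm.surjective a
  obtain ⟨v, rfl⟩ := (Equiv.Set.union hXY.disjoint).symm.surjective b
  simp only [Equiv.trans_apply, Equiv.apply_symm_apply, comap_adj, Function.Embedding.coe_subtype]
  rcases u with x | y <;> rcases v with x' | y' <;>
    simp only [Equiv.sumCongr_apply, Sum.map_inl, Sum.map_inr, Equiv.Set.union_symm_apply_left,
      Equiv.Set.union_symm_apply_right]
  · exact e₁.map_adj_iff
  · exact iff_of_true (hXY' (e₁ x).2 (e₂ y').2) (hXY x.2 y'.2)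
  · exact iff_of_true (hXY' (e₁ x').2 (e₂ y).2).symm (hXY x'.2 y.2).symm
  · exact e₂.map_adj_iff

/-- Both sides are joins of a copy of `A ≅ A'` with a common part:
`B = φ⁻¹ A' ∪ R` and `B' = φ A ∪ φ R`. -/
lemma nonempty_iso_induce_of_mapsTo_swap (φ : Γ ≃g Δ) {A B : Set α} {A' B' : Set β}
    (hφ : ∀ x, φ x ∈ A' ∪ B' ↔ x ∈ A ∪ B)
    (hAB : Γ.IsCompleteBetween A B) (hAB' : Δ.IsCompleteBetween A' B')
    (hA_B' : Set.MapsTo φ A B') (hA'_B : Set.MapsTo φ.symm A' B)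
    (e : Γ.induce A ≃g Δ.induce A') :
    Nonempty (Γ.induce B ≃g Δ.induce B') := by
  have hdisj := Set.disjoint_left.1 hAB.disjoint
  have hdisj' := Set.disjoint_left.1 hAB'.disjoint
  set C := φ ⁻¹' A'
  set D := φ.symm ⁻¹' A
  have hR : ∀ x, φ x ∈ B' \ D ↔ x ∈ B \ C := fun x => by
    simp only [Set.mem_sdiff, C, D, Set.mem_preimage, RelIso.symm_apply_apply]
    constructor
    · rintro ⟨hxB', hxA⟩
      exact ⟨((hφ x).1 (.inr hxB')).resolve_left hxA, (hdisj' · hxB')⟩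
    · rintro ⟨hxB, hxA'⟩
      exact ⟨((hφ x).2 (.inr hxB)).resolve_left hxA', (hdisj · hxB)⟩
  have hCB : C ⊆ B := fun x hx => by simpa using hA'_B hx
  have hDB' : D ⊆ B' := fun y hy => by simpa using hA_B' hy
  have e₁ : Γ.induce C ≃g Δ.induce D :=
    (φ.induce (φ.toEquiv.bijOn fun _ => Iff.rfl)).trans
      (e.symm.trans (φ.induce (φ.toEquiv.bijOn fun x => by simp [D])))
  have hCR : Γ.IsCompleteBetween C (B \ C) := fun c hc r hr =>
    φ.map_adj_iff.1 (hAB' hc ((hR r).2 hr).1)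
  have hDR' : Δ.IsCompleteBetween D (B' \ D) := fun d hd r' hr' => by
    rw [← φ.symm.map_adj_iff]
    refine hAB hd ?_
    simpa using ((hR (φ.symm r')).1 (by simpa using hr')).1
  rw [← Set.union_sdiff_cancel hCB, ← Set.union_sdiff_cancel hDB']
  exact ⟨Iso.induceUnion hCR hDR' e₁ (φ.induce (φ.toEquiv.bijOn hR))⟩

theorem nonempty_iso_induce_of_isCompleteBetween (φ : Γ ≃g Δ) {A B : Set α} {A' B' : Set β}
    (hφ : ∀ x, φ x ∈ A' ∪ B' ↔ x ∈ A ∪ B)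
    (hAB : Γ.IsCompleteBetween A B) (hAB' : Δ.IsCompleteBetween A' B')
    (hA : A.Nonempty) (hA' : A'.Nonempty)
    (hcA : Γ.HasCommonNonNeighbor A) (hcA' : Δ.HasCommonNonNeighbor A')
    (e : Γ.induce A ≃g Δ.induce A') :
    Nonempty (Γ.induce B ≃g Δ.induce B') := by
  have hφ' : ∀ y, φ.symm y ∈ A ∪ B ↔ y ∈ A' ∪ B' := fun y => by
    rw [← hφ, φ.apply_symm_apply]
  have hdisj := Set.disjoint_left.1 hAB.disjoint
  have hdisj' := Set.disjoint_left.1 hAB'.disjoint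
  rcases mapsTo_or_mapsTo_of_isCompleteBetween φ (fun x hx => (hφ x).2 (.inl hx)) hAB' hcA
    with hA_A' | hA_B' <;>
  rcases mapsTo_or_mapsTo_of_isCompleteBetween φ.symm (fun y hy => (hφ' y).2 (.inl hy)) hAB hcA'
    with hA'_A | hA'_B
  · refine ⟨φ.induce (φ.toEquiv.bijOn fun x => ⟨fun hx => ?_, fun hx => ?_⟩)⟩
    · exact ((hφ x).1 (.inr hx)).resolve_left fun hxA => hdisj' (hA_A' hxA) hx
    · refine ((hφ x).2 (.inr hx)).resolve_left fun hxA' => hdisj ?_ hx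
      simpa using hA'_A hxA'
  · obtain ⟨a, ha⟩ := hA
    exact absurd ha (hdisj · (by simpa using hA'_B (hA_A' ha)))
  · obtain ⟨a', ha'⟩ := hA'
    exact absurd (by simpa using hA_B' (hA'_A ha')) (hdisj' ha')
  · exact nonempty_iso_induce_of_mapsTo_swap φ hφ hAB hAB' hA_B' hA'_B e

end SimpleGraph

theorem Nat.exists_coprime_of_seven_le {k : ℕ} (hk : 7 ≤ k) :
    ∃ j, 2 ≤ j ∧ j + 2 ≤ k ∧ j.Coprime k := by
  rcases Nat.even_or_odd k with ⟨m, rfl⟩ | hk_odd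
  · rcases Nat.even_or_odd m with ⟨l, rfl⟩ | ⟨l, rfl⟩
    · refine ⟨1 + l * 2, by omega, by omega, ?_⟩
      rw [show l + l + (l + l) = 2 ^ 2 * l by ring, Nat.coprime_mul_iff_right,
        Nat.coprime_add_mul_left_left]
      exact ⟨Nat.Coprime.pow_right 2 (by simp), Nat.coprime_one_left l⟩
    · refine ⟨2 + (2 * l + 1), by omega, by omega, ?_⟩
      rw [← two_mul, Nat.coprime_mul_iff_right, Nat.coprime_self_add_left,
        Nat.coprime_add_self_left]
      simp
  · exact ⟨2, le_rfl, by omega, Nat.coprime_two_left.2 hk_odd⟩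

namespace powerGraph

open Subgroup SimpleGraph

variable {K K' : Type*} [Group K] [Group K'] {u x y w : K}

lemma adj_iff_powArc : (powerGraph K).Adj x y ↔ powArc x y ∨ powArc y x := by
  constructor
  · rintro ⟨hne, n, hn, h | h⟩
    exacts [.inl ⟨hne, n, hn, h⟩, .inr ⟨hne.symm, n, hn, h⟩]
  · rintro (⟨hne, n, hn, h⟩ | ⟨hne, n, hn, h⟩)
    exacts [⟨hne, n, hn, .inl h⟩, ⟨hne.symm, n, hn, .inr h⟩]

lemma not_isOfFinOrder_zpow (hu : ¬IsOfFinOrder u) {n : ℤ} (hn : n ≠ 0) :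
    ¬IsOfFinOrder (u ^ n) := by
  rw [← injective_zpow_iff_not_isOfFinOrder] at hu ⊢
  intro a b h
  simp only [← zpow_mul] at h
  exact mul_left_cancel₀ hn (hu h)

lemma isOfFinOrder_of_adj (h : (powerGraph K).Adj x y) (hx : IsOfFinOrder x) :
    IsOfFinOrder y := by
  obtain ⟨-, n, hn, rfl | rfl⟩ := h
  · exact hx.zpow
  · exact not_not.1 fun hy => not_isOfFinOrder_zpow hy hn hx

lemma adj_zpow_zpow_iff (hu : ¬IsOfFinOrder u) {a b : ℤ} (ha : a ≠ 0) (hb : b ≠ 0) :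
    (powerGraph K).Adj (u ^ a) (u ^ b) ↔ a ≠ b ∧ (a ∣ b ∨ b ∣ a) := by
  have hinj := injective_zpow_iff_not_isOfFinOrder.2 hu
  simp only [powerGraph, ← zpow_mul, hinj.eq_iff, ne_eq]
  refine and_congr_right fun _ => ⟨?_, ?_⟩
  · rintro ⟨n, -, rfl | rfl⟩
    exacts [.inl ⟨n, rfl⟩, .inr ⟨n, rfl⟩]
  · rintro (⟨n, rfl⟩ | ⟨n, rfl⟩)
    exacts [⟨n, right_ne_zero_of_mul hb, .inl rfl⟩, ⟨n, right_ne_zero_of_mul ha, .inr rfl⟩]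

lemma not_adj_zpow_prime (hu : ¬IsOfFinOrder u) {a : ℤ} (ha : 2 ≤ a.natAbs) {p : ℕ}
    (hp : p.Prime) (hap : a.natAbs < p) : ¬(powerGraph K).Adj (u ^ a) (u ^ (p : ℤ)) := by
  rw [adj_zpow_zpow_iff hu (by omega) (by exact_mod_cast hp.ne_zero)]
  rintro ⟨-, h | h⟩
  · have h' := Int.natAbs_dvd_natAbs.2 h
    rw [Int.natAbs_natCast] at h'
    rcases hp.eq_one_or_self_of_dvd _ h' with h'' | h'' <;> omega
  · have h' := Nat.le_of_dvd (by omega) (Int.natAbs_dvd_natAbs.2 h)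
    rw [Int.natAbs_natCast] at h'
    omega

lemma outSet_eq_image (hu : ¬IsOfFinOrder u) :
    outSet u = (fun b : ℤ => u ^ b) '' {b | b ≠ 0 ∧ b ≠ 1} := by
  have hinj := injective_zpow_iff_not_isOfFinOrder.2 hu
  ext y
  simp only [outSet, powArc, Set.mem_ofPred_eq, Set.mem_image]
  constructor
  · rintro ⟨hne, b, hb, rfl⟩
    exact ⟨b, ⟨hb, by rintro rfl; exact hne (zpow_one u).symm⟩, rfl⟩
  · rintro ⟨b, ⟨hb0, hb1⟩, rfl⟩
    refine ⟨fun h => hb1 (hinj ?_).symm, b, hb0, rfl⟩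
    simpa using h

lemma outSet_sdiff_inv_eq_image (hu : ¬IsOfFinOrder u) :
    outSet u \ {u⁻¹} = (fun b : ℤ => u ^ b) '' {b | 2 ≤ b.natAbs} := by
  have hinj := injective_zpow_iff_not_isOfFinOrder.2 hu
  rw [outSet_eq_image hu, ← zpow_neg_one, ← Set.image_singleton, ← Set.image_sdiff hinj]
  congr 1
  ext b
  simp only [Set.mem_sdiff, Set.mem_ofPred_eq, Set.mem_singleton_iff]
  omega

theorem nonempty_iso_induce_zpow_image (hu : ¬IsOfFinOrder u) {u' : K'} (hu' : ¬IsOfFinOrder u')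
    {S : Set ℤ} (hS : 0 ∉ S) :
    Nonempty ((powerGraph K).induce ((fun b : ℤ => u ^ b) '' S) ≃g
      (powerGraph K').induce ((fun b : ℤ => u' ^ b) '' S)) := by
  have hinj := injective_zpow_iff_not_isOfFinOrder.2 hu
  have hinj' := injective_zpow_iff_not_isOfFinOrder.2 hu'
  refine ⟨⟨(Equiv.Set.image _ S hinj).symm.trans (Equiv.Set.image _ S hinj'), ?_⟩⟩
  intro a b
  obtain ⟨⟨a, ha⟩, rfl⟩ := (Equiv.Set.image _ S hinj).surjective a
  obtain ⟨⟨b, hb⟩, rfl⟩ := (Equiv.Set.image _ S hinj).surjective b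
  have ha0 : a ≠ 0 := ne_of_mem_of_not_mem ha hS
  have hb0 : b ≠ 0 := ne_of_mem_of_not_mem hb hS
  simp only [Equiv.trans_apply, Equiv.symm_apply_apply]
  simp only [comap_adj, Function.Embedding.coe_subtype, Equiv.Set.image_apply,
    adj_zpow_zpow_iff hu ha0 hb0, adj_zpow_zpow_iff hu' ha0 hb0]

theorem nonempty_iso_induce_outSet (hu : ¬IsOfFinOrder u) {u' : K'} (hu' : ¬IsOfFinOrder u') :
    Nonempty ((powerGraph K).induce (outSet u) ≃g (powerGraph K').induce (outSet u')) := by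
  rw [outSet_eq_image hu, outSet_eq_image hu']
  exact nonempty_iso_induce_zpow_image hu hu' fun h => h.1 rfl

lemma nonempty_outSet_sdiff_inv (hu : ¬IsOfFinOrder u) : (outSet u \ {u⁻¹}).Nonempty := by
  rw [outSet_sdiff_inv_eq_image hu]
  exact ⟨_, 2, by simp, rfl⟩

lemma hasCommonNonNeighbor_outSet_sdiff_inv (hu : ¬IsOfFinOrder u) :
    (powerGraph K).HasCommonNonNeighbor (outSet u \ {u⁻¹}) := by
  rw [outSet_sdiff_inv_eq_image hu]
  rintro _ ⟨a, ha, rfl⟩ _ ⟨b, hb, rfl⟩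
  obtain ⟨p, hp_le, hp⟩ := Nat.exists_infinite_primes (max a.natAbs b.natAbs + 1)
  refine ⟨u ^ (p : ℤ), ⟨p, by simpa using hp.two_le, rfl⟩,
    not_adj_zpow_prime hu ha hp (by omega),
    fun h => not_adj_zpow_prime hu hb hp (by omega) h.symm⟩

lemma isClosedTwin_of_zpow_eq (hxw : x ≠ w) {m n : ℤ} (hm : m ≠ 0) (hn : n ≠ 0)
    (hw : w = x ^ m) (hx : x = w ^ n) : (powerGraph K).IsClosedTwin x w := by
  have adj_transfer : ∀ {x w : K} {m n : ℤ}, m ≠ 0 → n ≠ 0 → w = x ^ m → x = w ^ n →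
      ∀ t, t ≠ w → (powerGraph K).Adj x t → (powerGraph K).Adj w t := by
    rintro x w m n hm hn hw hx t htw ⟨-, k, hk, ht | ht⟩
    · exact ⟨htw.symm, n * k, mul_ne_zero hn hk, .inl (by rw [ht, hx, zpow_mul])⟩
    · exact ⟨htw.symm, k * m, mul_ne_zero hk hm, .inr (by rw [hw, ht, zpow_mul])⟩
  exact ⟨⟨hxw, m, hm, .inl hw⟩, fun t htx htw =>
    ⟨adj_transfer hm hn hw hx t htw, adj_transfer hn hm hx hw t htx⟩⟩

lemma isClosedTwin_inv (hx : x ≠ x⁻¹) : (powerGraph K).IsClosedTwin x x⁻¹ :=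
  isClosedTwin_of_zpow_eq hx (m := -1) (n := -1) (by simp) (by simp) (by simp) (by simp)

lemma zpow_eq_inv_of_isClosedTwin (hu : ¬IsOfFinOrder u) {n : ℤ} (hn : n ≠ 0)
    (h : (powerGraph K).IsClosedTwin u (u ^ n)) : u ^ n = u⁻¹ := by
  have hinj := injective_zpow_iff_not_isOfFinOrder.2 hu
  by_contra hne
  have hn1 : n ≠ 1 := by rintro rfl; exact h.1.ne (zpow_one u).symm
  have hnm1 : n ≠ -1 := by rintro rfl; exact hne (zpow_neg_one u)
  obtain ⟨p, hp_le, hp⟩ := Nat.exists_infinite_primes (n.natAbs + 2)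
  have hpu : u ≠ u ^ (p : ℤ) := fun h' => by
    have := hinj (h'.symm.trans (zpow_one u).symm); omega
  have hpn : u ^ (p : ℤ) ≠ u ^ n := fun h' => by have := hinj h'; omega
  exact not_adj_zpow_prime hu (by omega) hp (by omega)
    ((h.2 _ hpu.symm hpn).1 ⟨hpu, p, by exact_mod_cast hp.ne_zero, .inl rfl⟩)

lemma eq_inv_of_isClosedTwin (hu : ¬IsOfFinOrder u) (h : (powerGraph K).IsClosedTwin u w) :
    w = u⁻¹ := by
  obtain ⟨-, n, hn, rfl | rfl⟩ := h.1
  · exact zpow_eq_inv_of_isClosedTwin hu hn h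
  · have hw : ¬IsOfFinOrder w := fun hw => hu hw.zpow
    rw [zpow_eq_inv_of_isClosedTwin hw hn h.symm, inv_inv]

lemma orderOf_le_six_of_subsingleton_isClosedTwin {h : K}
    (huniq : {w | (powerGraph K).IsClosedTwin h w}.Subsingleton) : orderOf h ≤ 6 := by
  by_contra! hk
  obtain ⟨j, hj2, hjk, hcop⟩ := Nat.exists_coprime_of_seven_le hk
  obtain ⟨j', hj'⟩ := exists_pow_eq_self_of_coprime hcop
  have hj'0 : j' ≠ 0 := by
    rintro rfl
    rw [pow_zero, eq_comm, ← orderOf_eq_one_iff] at hj'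
    omega
  have hjh : h ^ j ≠ h := fun hj => by
    have := pow_injOn_Iio_orderOf (x := h) (x₁ := j) (x₂ := 1) (by simp; omega)
      (by simp; omega) (by simpa using hj)
    omega
  have hinv : h ^ j ≠ h⁻¹ := fun hj =>
    pow_ne_one_of_lt_orderOf (n := j + 1) (by omega) (by omega)
      ((pow_succ h j).trans (mul_eq_one_iff_eq_inv.2 hj))
  have hh2 : h ≠ h⁻¹ := fun h2 =>
    pow_ne_one_of_lt_orderOf (n := 2) (by omega) (by omega)
      ((pow_two h).trans (mul_eq_one_iff_eq_inv.2 h2))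
  refine hinv (huniq ?_ (isClosedTwin_inv hh2))
  refine isClosedTwin_of_zpow_eq hjh.symm (m := j) (n := j') (by omega) (by omega) ?_ ?_
  · rw [zpow_natCast]
  · rw [zpow_natCast, hj']

lemma card_le_of_isClique {s : Finset K} (hs : (powerGraph K).IsClique (s : Set K))
    (hfin : ∀ x ∈ s, IsOfFinOrder x) {n : ℕ} (hn : ∀ x ∈ s, orderOf x ≤ n) :
    s.card ≤ n := by
  rcases s.eq_empty_or_nonempty with rfl | hne
  · simp
  obtain ⟨m, hm, hmax⟩ := s.exists_max_image orderOf hne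
  have : Finite (zpowers m) := (hfin m hm).finite_zpowers.to_subtype
  have hsub : (s : Set K) ⊆ zpowers m := by
    intro x hx
    by_cases hxm : x = m
    · rw [hxm]; exact mem_zpowers m
    obtain ⟨-, k, -, hmx | hxm'⟩ := hs hx hm hxm
    · have : Finite (zpowers x) := (hfin x hx).finite_zpowers.to_subtype
      have hle : zpowers m ≤ zpowers x := zpowers_le.2 ⟨k, hmx.symm⟩
      rw [eq_of_le_of_card_ge hle (by simpa only [Nat.card_zpowers] using hmax x hx)]
      exact mem_zpowers x
    · exact ⟨k, hxm'.symm⟩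
  calc s.card = (s : Set K).ncard := (Set.ncard_coe_finset s).symm
    _ ≤ (zpowers m : Set K).ncard := Set.ncard_le_ncard hsub (Set.toFinite _)
    _ = orderOf m := by rw [← Nat.card_coe_set_eq]; exact Nat.card_zpowers m
    _ ≤ n := hn m hm

theorem not_isOfFinOrder_map (f : powerGraph K ≃g powerGraph K') (hu : ¬IsOfFinOrder u) :
    ¬IsOfFinOrder (f u) := by
  intro hfu
  set g : ℕ → K := fun i => u ^ (2 : ℤ) ^ i
  have hpow_inj : Function.Injective fun i : ℕ => (2 : ℤ) ^ i :=
    Int.pow_right_injective (by decide)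
  have hg_inj : Function.Injective g :=
    (injective_zpow_iff_not_isOfFinOrder.2 hu).comp hpow_inj
  have hg_adj : ∀ i j, i ≠ j → (powerGraph K).Adj (g i) (g j) := fun i j hij =>
    (adj_zpow_zpow_iff hu (by positivity) (by positivity)).2
      ⟨hpow_inj.ne hij, (le_total i j).imp (pow_dvd_pow 2) (pow_dvd_pow 2)⟩
  have hg_fin : ∀ i, IsOfFinOrder (f (g i)) := by
    rintro (_ | i)
    · simpa [g] using hfu
    · exact isOfFinOrder_of_adj (f.map_adj_iff.2 (hg_adj 0 (i + 1) (by omega)))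
        (by simpa [g] using hfu)
  have hg_ord : ∀ i, orderOf (f (g i)) ≤ 6 := fun i => by
    have hgi : ¬IsOfFinOrder (g i) := not_isOfFinOrder_zpow hu (by positivity)
    refine orderOf_le_six_of_subsingleton_isClosedTwin fun w hw w' hw' => f.symm.injective ?_
    have h₁ := hw.map f.symm
    have h₂ := hw'.map f.symm
    rw [RelIso.symm_apply_apply] at h₁ h₂
    rw [eq_inv_of_isClosedTwin hgi h₁, eq_inv_of_isClosedTwin hgi h₂]
  set s := (Finset.range 7).map ⟨f ∘ g, f.injective.comp hg_inj⟩
  have hs : (powerGraph K').IsClique (s : Set K') := by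
    rintro _ hx _ hy hxy
    obtain ⟨i, -, rfl⟩ := Finset.mem_map.1 hx
    obtain ⟨j, -, rfl⟩ := Finset.mem_map.1 hy
    exact f.map_adj_iff.2 (hg_adj i j fun h => hxy (by rw [h]))
  have hcard := card_le_of_isClique hs (n := 6)
    (fun x hx => by obtain ⟨i, -, rfl⟩ := Finset.mem_map.1 hx; exact hg_fin i)
    (fun x hx => by obtain ⟨i, -, rfl⟩ := Finset.mem_map.1 hx; exact hg_ord i)
  simp [s] at hcard

lemma ne_inv_of_not_isOfFinOrder (hu : ¬IsOfFinOrder u) : u ≠ u⁻¹ := fun h => by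
  have := injective_zpow_iff_not_isOfFinOrder.2 hu (a₁ := 1) (a₂ := -1) (by simpa using h)
  omega

lemma inv_mem_inSet (hu : u ≠ u⁻¹) : u⁻¹ ∈ inSet u :=
  ⟨hu.symm, -1, by simp, by simp⟩

lemma eq_inv_of_mem_inSet_of_mem_outSet (hu : ¬IsOfFinOrder u) (hy : y ∈ inSet u)
    (hy' : y ∈ outSet u) : y = u⁻¹ := by
  obtain ⟨hne, b, -, rfl⟩ := hy'
  obtain ⟨-, a, -, ha⟩ := hy
  have hba : b * a = 1 :=
    injective_zpow_iff_not_isOfFinOrder.2 hu (by simp only [zpow_mul, ← ha, zpow_one])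
  rcases Int.eq_one_or_neg_one_of_mul_eq_one hba with rfl | rfl
  · exact absurd (zpow_one u).symm hne
  · exact zpow_neg_one u

lemma isCompleteBetween_outSet_sdiff_inSet (hu : ¬IsOfFinOrder u) :
    (powerGraph K).IsCompleteBetween (outSet u \ {u⁻¹}) (inSet u) := by
  rintro x ⟨hx, hx_inv⟩ y hy
  refine ⟨fun hxy => hx_inv (eq_inv_of_mem_inSet_of_mem_outSet hu (hxy ▸ hy) hx), ?_⟩
  obtain ⟨-, a, ha, hua⟩ := hy
  obtain ⟨-, b, hb, rfl⟩ := hx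
  exact ⟨a * b, mul_ne_zero ha hb, .inr (by rw [zpow_mul, ← hua])⟩

lemma outSet_sdiff_inv_union_inSet (hu : ¬IsOfFinOrder u) :
    outSet u \ {u⁻¹} ∪ inSet u = (powerGraph K).neighborSet u := by
  ext y
  by_cases hy : y = u⁻¹
  · have h := inv_mem_inSet (ne_inv_of_not_isOfFinOrder hu)
    subst hy
    exact iff_of_true (.inr h) (adj_iff_powArc.2 (.inr h))
  · simp [hy, adj_iff_powArc, outSet, inSet]

theorem nonempty_iso_induce_inSet (f : powerGraph K ≃g powerGraph K') (hu : ¬IsOfFinOrder u)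
    (hfu : ¬IsOfFinOrder (f u)) :
    Nonempty ((powerGraph K).induce (inSet u) ≃g (powerGraph K').induce (inSet (f u))) := by
  obtain ⟨e⟩ : Nonempty ((powerGraph K).induce (outSet u \ {u⁻¹}) ≃g
      (powerGraph K').induce (outSet (f u) \ {(f u)⁻¹})) := by
    rw [outSet_sdiff_inv_eq_image hu, outSet_sdiff_inv_eq_image hfu]
    exact nonempty_iso_induce_zpow_image hu hfu (by simp)
  refine nonempty_iso_induce_of_isCompleteBetween f (fun x => ?_)
    (isCompleteBetween_outSet_sdiff_inSet hu) (isCompleteBetween_outSet_sdiff_inSet hfu)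
    (nonempty_outSet_sdiff_inv hu) (nonempty_outSet_sdiff_inv hfu)
    (hasCommonNonNeighbor_outSet_sdiff_inv hu) (hasCommonNonNeighbor_outSet_sdiff_inv hfu) e
  rw [outSet_sdiff_inv_union_inSet hu, outSet_sdiff_inv_union_inSet hfu]
  exact f.map_adj_iff

end powerGraph

/-- If `G` is torsion-free, `f : P(G) → P(H)` is a power graph isomorphism and
`z ≠ 1`, then the induced subgraphs on `I_G(z)` and `I_H(f z)` are isomorphic,
and likewise for `O_G(z)` and `O_H(f z)`. -/
theorem stmt_8 (G H : Type*) [Group G] [Group H]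
    (htf : ∀ g : G, g ≠ 1 → ¬ IsOfFinOrder g)
    (f : powerGraph G ≃g powerGraph H) (z : G) (hz : z ≠ 1) :
    Nonempty ((powerGraph G).induce (inSet z) ≃g
        (powerGraph H).induce (inSet (f z))) ∧
      Nonempty ((powerGraph G).induce (outSet z) ≃g
        (powerGraph H).induce (outSet (f z))) := by
  have hz_inf : ¬IsOfFinOrder z := htf z hz
  have hfz_inf := powerGraph.not_isOfFinOrder_map f hz_inf
  exact ⟨powerGraph.nonempty_iso_induce_inSet f hz_inf hfz_inf,
    powerGraph.nonempty_iso_induce_outSet hz_inf hfz_inf⟩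
end

section
/- Let a, b be integers that are adjacent in the power graph P(ℤ) of the additive group of integers, with a ≠ b and a ≠ -b. Then there is an arc a → b in the directed power graph of ℤ (i.e. b = n·a for some nonzero integer n) if and only if the set S_{a,b} is finite. -/
/-- `S a b` is the set of integers adjacent to `b` but not to `a` in the power
graph of `ℤ`. -/
def S (a b : ℤ) : Set ℤ :=
  {c : ℤ | (addPowerGraph ℤ).Adj c b ∧ ¬ (addPowerGraph ℤ).Adj c a}

/-!
Inside `ℤ`, an arc `x → y` just says `x ∣ y` with `y ≠ 0` and `x ≠ y`. If `a ∣ b`, every `c` adjacent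
to `b` but not to `a` must divide `b` (a multiple of `b` is a multiple of `a`, hence adjacent to `a`),
so `S a b` is finite. Otherwise adjacency forces `b ∣ a` with `a ∤ b`, and for every prime `p ∤ a`
the multiple `p * b` is adjacent to `b` but neither divides nor is divisible by `a`.
-/

theorem addPowerGraph_adj_iff_addPowArc {G : Type*} [AddGroup G] {x y : G} :
    (addPowerGraph G).Adj x y ↔ addPowArc x y ∨ addPowArc y x := by
  simp only [addPowerGraph, addPowArc, ne_comm (a := y), ← and_or_left, ← exists_or, ← and_or_left]

namespace Int

theorem addPowArc_iff_dvd {x y : ℤ} : addPowArc x y ↔ x ≠ y ∧ y ≠ 0 ∧ x ∣ y := by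
  refine and_congr_right fun hxy => ⟨?_, ?_⟩
  · rintro ⟨n, hn, rfl⟩
    rw [smul_eq_mul] at hxy ⊢
    refine ⟨fun h => hxy ?_, dvd_mul_left x n⟩
    rw [h, (mul_eq_zero.mp h).resolve_left hn]
  · rintro ⟨hy, k, rfl⟩
    exact ⟨k, right_ne_zero_of_mul hy, by rw [smul_eq_mul, mul_comm]⟩

theorem finite_setOf_dvd {b : ℤ} (hb : b ≠ 0) : {c : ℤ | c ∣ b}.Finite :=
  (Set.finite_Icc (-|b|) |b|).subset fun c hc => by
    have := natAbs_le_of_dvd_ne_zero hc hb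
    simp only [Set.mem_Icc, abs_eq_natAbs]
    omega

theorem S_subset_setOf_dvd {a b : ℤ} (hab : addPowArc a b) : S a b ⊆ {c | c ∣ b} := by
  obtain ⟨-, hb, hdvd⟩ := addPowArc_iff_dvd.mp hab
  rintro c ⟨hcb, hca⟩
  simp only [addPowerGraph_adj_iff_addPowArc, addPowArc_iff_dvd, not_or, not_and_or, not_not]
    at hcb hca
  rcases hcb with ⟨-, -, hcb⟩ | ⟨-, hc, hbc⟩
  · exact hcb
  · obtain rfl : a = c := hca.2.resolve_right (not_or.mpr ⟨hc, not_not.mpr (hdvd.trans hbc)⟩)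
    exact hdvd

theorem mul_mem_S {a b p : ℤ} (hba : addPowArc b a) (hnab : ¬ addPowArc a b) (hp : Prime p)
    (hpa : ¬ p ∣ a) : p * b ∈ S a b := by
  obtain ⟨hne, ha, hdvd⟩ := addPowArc_iff_dvd.mp hba
  have hb : b ≠ 0 := ne_zero_of_dvd_ne_zero ha hdvd
  have hndvd : ¬ a ∣ b := fun h => hnab (addPowArc_iff_dvd.mpr ⟨hne.symm, hb, h⟩)
  simp only [S, Set.mem_ofPred_eq, addPowerGraph_adj_iff_addPowArc, addPowArc_iff_dvd]
  refine ⟨Or.inr ⟨fun h => hp.ne_one ?_, mul_ne_zero hp.ne_zero hb, dvd_mul_left b p⟩, ?_⟩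
  · simpa [hb] using h.symm
  rintro (⟨-, -, h⟩ | ⟨-, -, h⟩)
  · exact hpa ((dvd_mul_right p b).trans h)
  · exact hndvd (((hp.coprime_iff_not_dvd.mpr hpa).symm).dvd_of_dvd_mul_left h)

theorem S_infinite {a b : ℤ} (hba : addPowArc b a) (hnab : ¬ addPowArc a b) :
    (S a b).Infinite := by
  obtain ⟨-, ha, hdvd⟩ := addPowArc_iff_dvd.mp hba
  have hb : b ≠ 0 := ne_zero_of_dvd_ne_zero ha hdvd
  have hprimes : {p : ℕ | p.Prime ∧ a.natAbs < p}.Infinite :=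
    Set.infinite_of_forall_exists_gt fun n => by
      obtain ⟨p, hle, hp⟩ := Nat.exists_infinite_primes (max n a.natAbs + 1)
      exact ⟨p, ⟨hp, by omega⟩, by omega⟩
  have hinj : Set.InjOn (fun p : ℕ => (p : ℤ) * b) {p | p.Prime ∧ a.natAbs < p} :=
    fun p _ q _ h => by exact_mod_cast mul_right_cancel₀ hb h
  refine (hprimes.image hinj).mono ?_
  rintro _ ⟨p, ⟨hp, hpa⟩, rfl⟩
  refine mul_mem_S hba hnab (Nat.prime_iff_prime_int.mp hp) fun h => ?_
  have := natAbs_le_of_dvd_ne_zero h ha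
  rw [Int.natAbs_natCast] at this
  omega

end Int

theorem stmt_9_general (a b : ℤ) (hab : (addPowerGraph ℤ).Adj a b) :
    addPowArc a b ↔ (S a b).Finite := by
  refine ⟨fun h => (Int.finite_setOf_dvd (Int.addPowArc_iff_dvd.mp h).2.1).subset
    (Int.S_subset_setOf_dvd h), fun hfin => ?_⟩
  by_contra harc
  have hba : addPowArc b a := (addPowerGraph_adj_iff_addPowArc.mp hab).resolve_left harc
  exact Int.S_infinite hba harc hfin

/-- For adjacent integers `a, b` with `a ≠ b` and `a ≠ -b`: there is an arc
`a → b` in the directed power graph of `ℤ` iff `S a b` is finite. -/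
theorem stmt_9 (a b : ℤ) (hab : (addPowerGraph ℤ).Adj a b)
    (h1 : a ≠ b) (h2 : a ≠ -b) :
    addPowArc a b ↔ (S a b).Finite :=
  stmt_9_general a b hab
end

section
/- Let G be a torsion-free group of nilpotency class at most 2, and let a, b ∈ G be such that the cyclic subgroups ⟨a⟩ and ⟨b⟩ are distinct maximal cyclic subgroups of G. Then ⟨a⟩ ∩ ⟨b⟩ is the trivial subgroup. -/
section

open Subgroup
open scoped commutatorElement

variable {G : Type*} [Group G]

section TorsionFree

variable (htf : ∀ g : G, g ≠ 1 → ¬ IsOfFinOrder g)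
include htf

theorem eq_one_of_zpow_eq_one {g : G} {k : ℤ} (hk : k ≠ 0) (h : g ^ k = 1) : g = 1 :=
  of_not_not fun hg ↦ htf g hg (isOfFinOrder_iff_zpow_eq_one.mpr ⟨k, hk, h⟩)

theorem Commute.eq_of_pow_eq_pow {x y : G} (hxy : Commute x y) {k : ℕ} (hk : 0 < k)
    (h : x ^ k = y ^ k) : x = y := by
  have hxy_k : (x * y⁻¹) ^ k = 1 := by
    rw [(hxy.inv_right).mul_pow, inv_pow, h, mul_inv_cancel]
  rw [← mul_inv_eq_one]
  exact of_not_not fun hne ↦ htf _ hne (isOfFinOrder_iff_pow_eq_one.mpr ⟨k, hk, hxy_k⟩)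

end TorsionFree

theorem Commute.exists_eq_zpow_of_isCoprime {a b : G} (hab : Commute a b) {m n : ℤ}
    (hmn : IsCoprime m n) (h : a ^ m = b ^ n) : ∃ c : G, a = c ^ n ∧ b = c ^ m := by
  obtain ⟨u, v, huv⟩ := hmn
  have hc : Commute (a ^ v) (b ^ u) := hab.zpow_zpow v u
  refine ⟨a ^ v * b ^ u, ?_, ?_⟩
  · rw [hc.mul_zpow, ← zpow_mul, ← zpow_mul, mul_comm u, zpow_mul b n, ← h, ← zpow_mul,
      ← zpow_add, show v * n + m * u = 1 by linear_combination huv, zpow_one]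
  · rw [hc.mul_zpow, ← zpow_mul, ← zpow_mul, mul_comm v, zpow_mul a m, h, ← zpow_mul,
      ← zpow_add, show n * v + u * m = 1 by linear_combination huv, zpow_one]

theorem Commute.exists_mem_zpowers_of_zpow_eq_zpow (htf : ∀ g : G, g ≠ 1 → ¬ IsOfFinOrder g)
    {a b : G} (hab : Commute a b) {m n : ℤ} (hm : m ≠ 0) (h : a ^ m = b ^ n) :
    ∃ c : G, a ∈ zpowers c ∧ b ∈ zpowers c := by
  obtain ⟨g, m', n', hg, hcop, rfl, rfl⟩ := Int.exists_gcd_one' (Int.gcd_pos_of_ne_zero_left n hm)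
  have h' : a ^ m' = b ^ n' := by
    refine (hab.zpow_zpow m' n').eq_of_pow_eq_pow htf hg ?_
    rwa [← zpow_natCast, ← zpow_natCast, ← zpow_mul, ← zpow_mul]
  obtain ⟨c, rfl, rfl⟩ :=
    hab.exists_eq_zpow_of_isCoprime (Int.isCoprime_iff_gcd_eq_one.mpr hcop) h'
  exact ⟨c, zpow_mem_zpowers c n', zpow_mem_zpowers c m'⟩

section ClassTwo

variable (hnil : commutator G ≤ center G)
include hnil

theorem commutatorElement_mul_right_of_le_center (a b c : G) :
    ⁅a, b * c⁆ = ⁅a, b⁆ * ⁅a, c⁆ := by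
  have hcentral : ⁅a, c⁆ ∈ center G :=
    hnil (commutator_mem_commutator (mem_top a) (mem_top c))
  rw [commutatorElement_mul_right_eq_mul_conj, mul_assoc _ b, mem_center_iff.mp hcentral b,
    ← mul_assoc, mul_inv_cancel_right]

theorem commutatorElement_zpow_right_of_le_center (a b : G) (n : ℤ) :
    ⁅a, b ^ n⁆ = ⁅a, b⁆ ^ n :=
  (MonoidHom.mk' (fun g ↦ ⁅a, g⁆) (commutatorElement_mul_right_of_le_center hnil a)).map_zpow b n

theorem Commute.of_zpow_right_of_le_center (htf : ∀ g : G, g ≠ 1 → ¬ IsOfFinOrder g)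
    {a b : G} {n : ℤ} (hn : n ≠ 0) (h : Commute a (b ^ n)) : Commute a b := by
  rw [← commutatorElement_eq_one_iff_commute] at h ⊢
  rw [commutatorElement_zpow_right_of_le_center hnil] at h
  exact eq_one_of_zpow_eq_one htf hn h

end ClassTwo

end

/-- In a torsion-free group of nilpotency class at most 2, distinct maximal
cyclic subgroups `⟨a⟩` and `⟨b⟩` intersect trivially. -/
theorem stmt_11 (G : Type*) [Group G]
    (htf : ∀ g : G, g ≠ 1 → ¬ IsOfFinOrder g)
    (hnil : commutator G ≤ Subgroup.center G)
    (a b : G)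
    (ha : IsMaxCyclic (Subgroup.zpowers a))
    (hb : IsMaxCyclic (Subgroup.zpowers b))
    (hab : Subgroup.zpowers a ≠ Subgroup.zpowers b) :
    Subgroup.zpowers a ⊓ Subgroup.zpowers b = ⊥ := by
  rw [Subgroup.eq_bot_iff_forall]
  rintro x ⟨hxa, hxb⟩
  obtain ⟨m, rfl⟩ := Subgroup.mem_zpowers_iff.mp hxa
  obtain ⟨n, hn⟩ := Subgroup.mem_zpowers_iff.mp hxb
  by_contra hx
  have hm0 : m ≠ 0 := by rintro rfl; exact hx (zpow_zero a)
  have hn0 : n ≠ 0 := by rintro rfl; exact hx (hn ▸ zpow_zero b)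
  have hcomm : Commute a b := by
    refine Commute.of_zpow_right_of_le_center hnil htf hn0 ?_
    rw [hn]
    exact (Commute.refl a).zpow_right m
  obtain ⟨c, hac, hbc⟩ := hcomm.exists_mem_zpowers_of_zpow_eq_zpow htf hm0 hn.symm
  have hca := ha.2 (Subgroup.zpowers c) inferInstance (Subgroup.zpowers_le.mpr hac)
  have hcb := hb.2 (Subgroup.zpowers c) inferInstance (Subgroup.zpowers_le.mpr hbc)
  exact hab (hca.trans hcb.symm)
end

section
/- Let G be a torsion-free group of nilpotency class at most 2 such that the subgraph of the power graph P(G) induced on the non-identity elements of G is connected, and let H be a group of nilpotency class at most 2. If P(G) is isomorphic to P(H), then the directed power graphs of G and H are isomorphic. -/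
/-!
Connectivity of `P(G)` away from `1` gives every two nontrivial elements of `G` a common nontrivial
power; in class at most two without torsion this makes `G` abelian of rank one. In a torsion-free
group `1` is isolated while every other element is adjacent to its square, so `f 1 = 1`, `H` is
torsion-free as well, and `H` inherits all of this through `f`.

Since `f` maps comparable pairs to comparable pairs, comparing `f (x ^ k)` with `f x` for mutually
non-dividing exponents shows that `f` sends either all proper powers of `x` to powers of `f x` or
all of them to roots of `f x`. The set of elements between two comparable ones is finite, which
forces this orientation to be the same for all `x`. If `f` preserves powers, it preserves arcs. If
it reverses them, the step from `z` to `z ^ p` (`p` prime) pulls back to a step of prime index `q`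
from `β` to `β ^ (±q)`; prolonging it by a second step to `β ^ (q ^ 2)` and pushing forward yields
`c` with `c ^ (±p) = z`. So both groups are divisible of rank one, and matching `x₀ ^ (b / a)` with
`y₀ ^ (b / a)` gives a bijection commuting with powers.
-/

open Subgroup

lemma not_dvd_prime_of_natAbs_lt {k : ℤ} {r : ℕ} (hr : r.Prime) (hk : 2 ≤ k.natAbs)
    (hkr : k.natAbs < r) : ¬k ∣ r ∧ ¬(r : ℤ) ∣ k := by
  refine ⟨fun h => ?_, fun h => ?_⟩
  · have := hr.eq_one_or_self_of_dvd _ (Int.natAbs_dvd_natAbs.2 h)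
    omega
  · have := Int.natAbs_le_of_dvd_ne_zero h (by omega)
    rw [Int.natAbs_natCast] at this
    omega

section Group

variable {G : Type*} [Group G]

lemma zpow_right_injective_of_ne_one (htf : ∀ g : G, g ≠ 1 → ¬IsOfFinOrder g) {a : G}
    (ha : a ≠ 1) : Function.Injective (a ^ · : ℤ → G) :=
  injective_zpow_iff_not_isOfFinOrder.2 (htf a ha)

lemma zpow_ne_one_of_ne_zero (htf : ∀ g : G, g ≠ 1 → ¬IsOfFinOrder g) {a : G} (ha : a ≠ 1)
    {n : ℤ} (hn : n ≠ 0) : a ^ n ≠ 1 := fun h =>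
  hn (zpow_right_injective_of_ne_one htf ha (h.trans (zpow_zero a).symm))

lemma zpow_mem_zpowers_zpow_iff (htf : ∀ g : G, g ≠ 1 → ¬IsOfFinOrder g) {a : G} (ha : a ≠ 1)
    {i j : ℤ} : a ^ i ∈ zpowers (a ^ j) ↔ j ∣ i := by
  simp only [mem_zpowers_iff, ← zpow_mul, (zpow_right_injective_of_ne_one htf ha).eq_iff]
  exact ⟨fun ⟨k, hk⟩ => ⟨k, by rw [← hk, mul_comm]⟩, fun ⟨k, hk⟩ => ⟨k, by rw [hk, mul_comm]⟩⟩

lemma mem_zpowers_trans {a b c : G} (hab : a ∈ zpowers b) (hbc : b ∈ zpowers c) :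
    a ∈ zpowers c :=
  zpowers_le.2 hbc hab

lemma finite_setOf_mem_zpowers_and_mem_zpowers (htf : ∀ g : G, g ≠ 1 → ¬IsOfFinOrder g) (a : G)
    {b : G} (hb : b ≠ 1) :
    {c : G | c ∈ zpowers a ∧ b ∈ zpowers c}.Finite := by
  by_cases hba : b ∈ zpowers a
  · obtain ⟨k, rfl⟩ := mem_zpowers_iff.1 hba
    have ha : a ≠ 1 := by rintro rfl; exact hb (one_zpow k)
    have hk : k ≠ 0 := by rintro rfl; exact hb (zpow_zero a)
    refine ((Set.finite_Icc (-(k.natAbs : ℤ)) k.natAbs).image (a ^ ·)).subset ?_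
    rintro c ⟨hc, hbc⟩
    obtain ⟨j, rfl⟩ := mem_zpowers_iff.1 hc
    have := Int.natAbs_le_of_dvd_ne_zero ((zpow_mem_zpowers_zpow_iff htf ha).1 hbc) hk
    exact ⟨j, by simp only [Set.mem_Icc]; omega, rfl⟩
  · exact Set.finite_empty.subset fun c hc => (hba (mem_zpowers_trans hc.2 hc.1)).elim

open scoped commutatorElement in
lemma commute_of_commute_zpow (hnil : commutator G ≤ center G)
    (htf : ∀ g : G, g ≠ 1 → ¬IsOfFinOrder g) {z x : G} {n : ℤ} (hn : n ≠ 0)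
    (h : Commute z (x ^ n)) : Commute z x := by
  have hc : ⁅z, x⁆ ∈ center G :=
    hnil (commutator_mem_commutator (mem_top z) (mem_top x))
  -- as `⁅z, x⁆` is central, `⁅z, x ^ n⁆ = ⁅z, x⁆ ^ n`
  have hconj : MulAut.conj z x = ⁅z, x⁆ * x := by
    simp only [MulAut.conj_apply, commutatorElement_def]; group
  have hpow : ⁅z, x⁆ ^ n * x ^ n = x ^ n := by
    have hcx : Commute ⁅z, x⁆ x := ((mem_center_iff.1 hc) x).symm
    rw [← hcx.mul_zpow, ← hconj, ← map_zpow, MulAut.conj_apply,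
      h.eq, mul_inv_cancel_right]
  by_contra hzx
  exact zpow_ne_one_of_ne_zero htf (mt commutatorElement_eq_one_iff_commute.1 hzx) hn
    (mul_eq_right.1 hpow)

lemma isMulTorsionFree_of_forall_commute (htf : ∀ g : G, g ≠ 1 → ¬IsOfFinOrder g)
    (hcomm : ∀ a b : G, Commute a b) : IsMulTorsionFree G := by
  refine ⟨fun n hn a b hab => ?_⟩
  have hpow : (a * b⁻¹) ^ n = 1 := by
    simp only [(hcomm a b⁻¹).mul_pow, inv_pow, hab, mul_inv_cancel]
  by_contra hne
  exact htf _ (mt mul_inv_eq_one.1 hne)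
    (isOfFinOrder_iff_pow_eq_one.2 ⟨n, Nat.pos_of_ne_zero hn, hpow⟩)

end Group

section PowerGraph

variable {G : Type*} [Group G]

lemma mem_zpowers_or_of_powerGraph_adj {x y : G} (h : (powerGraph G).Adj x y) :
    y ∈ zpowers x ∨ x ∈ zpowers y := by
  obtain ⟨-, n, -, h | h⟩ := h
  · exact Or.inl ⟨n, h.symm⟩
  · exact Or.inr ⟨n, h.symm⟩

lemma powerGraph_adj_of_mem_zpowers {x y : G} (hxy : x ≠ y) (hy : y ≠ 1)
    (h : y ∈ zpowers x) : (powerGraph G).Adj x y := by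
  obtain ⟨n, rfl⟩ := mem_zpowers_iff.1 h
  exact ⟨hxy, n, by rintro rfl; exact hy (zpow_zero x), Or.inl rfl⟩

lemma powerGraph_adj_zpow_s18 (htf : ∀ g : G, g ≠ 1 → ¬IsOfFinOrder g) {x : G} (hx : x ≠ 1)
    {k : ℤ} (hk0 : k ≠ 0) (hk1 : k ≠ 1) : (powerGraph G).Adj x (x ^ k) :=
  powerGraph_adj_of_mem_zpowers
    (fun h => hk1 (zpow_right_injective_of_ne_one htf hx ((zpow_one x).trans h)).symm)
    (zpow_ne_one_of_ne_zero htf hx hk0) (zpow_mem_zpowers x k)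

lemma powerGraph_adj_inv_of_adj {x g : G} (hg : g ≠ x⁻¹) (h : (powerGraph G).Adj x g) :
    (powerGraph G).Adj x⁻¹ g := by
  obtain ⟨-, n, hn, h | h⟩ := h
  · exact ⟨hg.symm, -n, neg_ne_zero.2 hn, Or.inl (by rw [h, inv_zpow', neg_neg])⟩
  · exact ⟨hg.symm, -n, neg_ne_zero.2 hn, Or.inr (by rw [h, zpow_neg])⟩

lemma eq_inv_of_mem_zpowers_of_powerGraph_adj_imp (htf : ∀ g : G, g ≠ 1 → ¬IsOfFinOrder g)
    {u v : G} (hu : u ≠ 1) (huv : u ≠ v)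
    (hmem : u ∈ zpowers v)
    (h : ∀ w, w ≠ u → (powerGraph G).Adj v w → (powerGraph G).Adj u w) : u = v⁻¹ := by
  obtain ⟨n, rfl⟩ := mem_zpowers_iff.1 hmem
  have hv : v ≠ 1 := by rintro rfl; exact hu (one_zpow n)
  by_contra hn
  have hn1 : n ≠ -1 := by rintro rfl; exact hn (zpow_neg_one v)
  have hn0 : n ≠ 0 := by rintro rfl; exact hu (zpow_zero v)
  have hn1' : n ≠ 1 := by rintro rfl; exact huv (zpow_one v)
  -- `v ^ (2n + 1)` is adjacent to `v` but not to `v ^ n`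
  have hadj := h (v ^ (2 * n + 1))
    (fun h' => by have := zpow_right_injective_of_ne_one htf hv h'; omega)
    (powerGraph_adj_zpow_s18 htf hv (by omega) (by omega))
  rcases mem_zpowers_or_of_powerGraph_adj hadj with h' | h'
  · have hdvd := (Int.dvd_add_right (dvd_mul_left n 2)).1
      ((zpow_mem_zpowers_zpow_iff htf hv).1 h')
    have := Int.natAbs_le_of_dvd_ne_zero hdvd one_ne_zero
    omega
  · have := Int.natAbs_le_of_dvd_ne_zero ((zpow_mem_zpowers_zpow_iff htf hv).1 h') hn0
    omega

lemma powerGraph_not_adj_one (htf : ∀ g : G, g ≠ 1 → ¬IsOfFinOrder g) (y : G) :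
    ¬(powerGraph G).Adj 1 y := by
  rintro ⟨hy, n, hn, h | h⟩
  · exact hy (by rw [h, one_zpow])
  · exact zpow_ne_one_of_ne_zero htf (Ne.symm hy) hn h.symm

lemma powerGraph_adj_one_of_isOfFinOrder {y : G} (hy : y ≠ 1) (hfin : IsOfFinOrder y) :
    (powerGraph G).Adj 1 y := by
  obtain ⟨n, hn, hyn⟩ := isOfFinOrder_iff_pow_eq_one.1 hfin
  exact ⟨Ne.symm hy, n, by exact_mod_cast hn.ne', Or.inr (by rw [zpow_natCast, hyn])⟩

lemma powerGraph_adj_zpow_two {x : G} (hx : x ≠ 1) : (powerGraph G).Adj x (x ^ (2 : ℤ)) :=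
  ⟨fun h => hx (by rwa [zpow_two, left_eq_mul] at h), 2, two_ne_zero, Or.inl rfl⟩

lemma not_powArc_one_left (y : G) : ¬powArc 1 y := fun ⟨hne, n, _, h⟩ =>
  hne (by rw [h, one_zpow])

lemma powArc_iff_mem_zpowers (htf : ∀ g : G, g ≠ 1 → ¬IsOfFinOrder g) {x y : G} :
    powArc x y ↔ x ≠ y ∧ y ≠ 1 ∧ y ∈ zpowers x := by
  constructor
  · rintro ⟨hxy, n, hn, rfl⟩
    refine ⟨hxy, fun h => ?_, zpow_mem_zpowers x n⟩
    rcases eq_or_ne x 1 with rfl | hx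
    · exact hxy (by rw [one_zpow])
    · exact zpow_ne_one_of_ne_zero htf hx hn h
  · rintro ⟨hxy, hy, hmem⟩
    obtain ⟨n, rfl⟩ := mem_zpowers_iff.1 hmem
    exact ⟨hxy, n, by rintro rfl; exact hy (zpow_zero x), rfl⟩

lemma powArc_congr_of_map_zpow {H : Type*} [Group H] (e : G ≃ H)
    (he : ∀ (x : G) (n : ℤ), e (x ^ n) = e x ^ n) (x y : G) :
    powArc x y ↔ powArc (e x) (e y) := by
  simp only [powArc, ← he, e.injective.ne_iff, e.injective.eq_iff]

end PowerGraph

section CommonPower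

variable {G : Type*} [Group G]

/-- In a torsion-free abelian group: `x` and `y` are linearly dependent over `ℤ`. -/
def HasCommonPower (x y : G) : Prop :=
  ∃ a b : ℤ, a ≠ 0 ∧ b ≠ 0 ∧ x ^ a = y ^ b

lemma HasCommonPower.refl (x : G) : HasCommonPower x x :=
  ⟨1, 1, one_ne_zero, one_ne_zero, rfl⟩

lemma HasCommonPower.trans {x y z : G} (hxy : HasCommonPower x y) (hyz : HasCommonPower y z) :
    HasCommonPower x z := by
  obtain ⟨a, b, ha, hb, hab⟩ := hxy
  obtain ⟨c, d, hc, hd, hcd⟩ := hyz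
  refine ⟨a * c, b * d, mul_ne_zero ha hc, mul_ne_zero hb hd, ?_⟩
  rw [zpow_mul, hab, ← zpow_mul, mul_comm b c, zpow_mul, hcd, ← zpow_mul, mul_comm]

lemma hasCommonPower_of_powerGraph_adj {x y : G} (h : (powerGraph G).Adj x y) :
    HasCommonPower x y := by
  obtain ⟨-, n, hn, h | h⟩ := h
  · exact ⟨n, 1, hn, one_ne_zero, by rw [h, zpow_one]⟩
  · exact ⟨1, n, one_ne_zero, hn, by rw [h, zpow_one]⟩

lemma hasCommonPower_of_reachable (htf : ∀ g : G, g ≠ 1 → ¬IsOfFinOrder g) {x y : G}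
    (hx : x ≠ 1) (h : (powerGraph G).Reachable x y) : HasCommonPower x y := by
  obtain ⟨p⟩ := h
  induction p with
  | nil => exact HasCommonPower.refl _
  | @cons _ v _ hadj _ ih =>
    -- `1` is isolated, so the walk never passes through it
    have hv : v ≠ 1 := by rintro rfl; exact powerGraph_not_adj_one htf _ hadj.symm
    exact (hasCommonPower_of_powerGraph_adj hadj).trans (ih hv)

lemma commute_of_forall_hasCommonPower (hnil : commutator G ≤ center G)
    (htf : ∀ g : G, g ≠ 1 → ¬IsOfFinOrder g)
    (h : ∀ x y : G, x ≠ 1 → y ≠ 1 → HasCommonPower x y) (x y : G) : Commute x y := by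
  rcases eq_or_ne x 1 with rfl | hx
  · exact Commute.one_left y
  rcases eq_or_ne y 1 with rfl | hy
  · exact Commute.one_right x
  obtain ⟨a, b, -, hb, hab⟩ := h x y hx hy
  exact commute_of_commute_zpow hnil htf hb (hab ▸ Commute.zpow_right (Commute.refl x) a)

end CommonPower

section PowerGraphIso

variable {G H : Type*} [Group G] [Group H]

lemma powerGraphIso_map_one_s18 (htfG : ∀ g : G, g ≠ 1 → ¬IsOfFinOrder g)
    (f : powerGraph G ≃g powerGraph H) : f 1 = 1 := by
  by_contra h
  have hadj := powerGraph_adj_zpow_two h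
  rw [← f.apply_symm_apply (f 1 ^ (2 : ℤ)), f.map_adj_iff] at hadj
  exact powerGraph_not_adj_one htfG _ hadj

lemma powerGraphIso_map_ne_one (htfG : ∀ g : G, g ≠ 1 → ¬IsOfFinOrder g)
    (f : powerGraph G ≃g powerGraph H) {x : G} (hx : x ≠ 1) : f x ≠ 1 := by
  rwa [← powerGraphIso_map_one_s18 htfG f, f.injective.ne_iff]

lemma powerGraphIso_symm_ne_one (htfG : ∀ g : G, g ≠ 1 → ¬IsOfFinOrder g)
    (f : powerGraph G ≃g powerGraph H) {u : H} (hu : u ≠ 1) : f.symm u ≠ 1 := fun h =>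
  hu (by rw [← f.apply_symm_apply u, h, powerGraphIso_map_one_s18 htfG f])

lemma powerGraphIso_reachable (htfG : ∀ g : G, g ≠ 1 → ¬IsOfFinOrder g)
    (f : powerGraph G ≃g powerGraph H)
    (hreach : ∀ x y : G, x ≠ 1 → y ≠ 1 → (powerGraph G).Reachable x y) {u v : H} (hu : u ≠ 1)
    (hv : v ≠ 1) : (powerGraph H).Reachable u v := by
  simpa using (hreach _ _ (powerGraphIso_symm_ne_one htfG f hu)
    (powerGraphIso_symm_ne_one htfG f hv)).map f.toHom

lemma torsionFree_of_powerGraphIso (htfG : ∀ g : G, g ≠ 1 → ¬IsOfFinOrder g)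
    (f : powerGraph G ≃g powerGraph H) : ∀ h : H, h ≠ 1 → ¬IsOfFinOrder h := by
  intro h hh hfin
  have hadj := powerGraph_adj_one_of_isOfFinOrder hh hfin
  rw [← powerGraphIso_map_one_s18 htfG f, ← f.apply_symm_apply h, f.map_adj_iff] at hadj
  exact powerGraph_not_adj_one htfG _ hadj

lemma map_mem_zpowers_map_zpow_of_not_mem (htfG : ∀ g : G, g ≠ 1 → ¬IsOfFinOrder g)
    (f : powerGraph G ≃g powerGraph H) {x : G} (hx : x ≠ 1) {k : ℤ} (hk : 2 ≤ k.natAbs)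
    (h : f (x ^ k) ∉ zpowers (f x)) : f x ∈ zpowers (f (x ^ k)) :=
  (mem_zpowers_or_of_powerGraph_adj
    (f.map_adj_iff.2 (powerGraph_adj_zpow_s18 htfG hx (by omega) (by omega)))).resolve_left h

lemma map_zpow_mem_zpowers_iff_of_not_dvd (htfG : ∀ g : G, g ≠ 1 → ¬IsOfFinOrder g)
    (f : powerGraph G ≃g powerGraph H) {x : G} (hx : x ≠ 1) {k l : ℤ} (hkl : ¬k ∣ l)
    (hlk : ¬l ∣ k) : f (x ^ k) ∈ zpowers (f x) ↔ f (x ^ l) ∈ zpowers (f x) := by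
  suffices key : ∀ k l : ℤ, ¬k ∣ l → ¬l ∣ k →
      f (x ^ k) ∈ zpowers (f x) → f (x ^ l) ∈ zpowers (f x) from
    ⟨key k l hkl hlk, key l k hlk hkl⟩
  intro k l hkl hlk hk
  by_contra hl
  have hl0 : l ≠ 0 := by rintro rfl; exact hkl (dvd_zero k)
  have hl1 : l ≠ 1 := by rintro rfl; exact hlk (one_dvd k)
  have hk0 : k ≠ 0 := by rintro rfl; exact hlk (dvd_zero l)
  have hne : x ^ l ≠ x ^ k := fun h => hkl (by rw [zpow_right_injective_of_ne_one htfG hx h])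
  -- otherwise `f (x ^ k)` would be a power of `f (x ^ l)`, although `k` and `l` are incomparable
  have hroot : f x ∈ zpowers (f (x ^ l)) :=
    (mem_zpowers_or_of_powerGraph_adj
      (f.map_adj_iff.2 (powerGraph_adj_zpow_s18 htfG hx hl0 hl1))).resolve_left hl
  have hadj : (powerGraph G).Adj (x ^ l) (x ^ k) :=
    f.map_adj_iff.1 (powerGraph_adj_of_mem_zpowers (f.injective.ne hne)
      (powerGraphIso_map_ne_one htfG f (zpow_ne_one_of_ne_zero htfG hx hk0))
      (mem_zpowers_trans hk hroot))
  rcases mem_zpowers_or_of_powerGraph_adj hadj with h | h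
  · exact hlk ((zpow_mem_zpowers_zpow_iff htfG hx).1 h)
  · exact hkl ((zpow_mem_zpowers_zpow_iff htfG hx).1 h)

lemma map_zpow_mem_zpowers_iff_map_sq_mem (htfG : ∀ g : G, g ≠ 1 → ¬IsOfFinOrder g)
    (f : powerGraph G ≃g powerGraph H) {x : G} (hx : x ≠ 1) {k : ℤ} (hk : 2 ≤ k.natAbs) :
    f (x ^ k) ∈ zpowers (f x) ↔ f (x ^ (2 : ℤ)) ∈ zpowers (f x) := by
  obtain ⟨r, hr, hrp⟩ := Nat.exists_infinite_primes (k.natAbs + 3)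
  obtain ⟨hkr, hrk⟩ := not_dvd_prime_of_natAbs_lt hrp hk (by omega)
  obtain ⟨h2r, hr2⟩ := not_dvd_prime_of_natAbs_lt (k := 2) hrp le_rfl (by omega)
  exact (map_zpow_mem_zpowers_iff_of_not_dvd htfG f hx hkr hrk).trans
    (map_zpow_mem_zpowers_iff_of_not_dvd htfG f hx hr2 h2r)

lemma map_sq_mem_zpowers_iff_of_zpow (htfG : ∀ g : G, g ≠ 1 → ¬IsOfFinOrder g)
    (htfH : ∀ h : H, h ≠ 1 → ¬IsOfFinOrder h) (f : powerGraph G ≃g powerGraph H) {x : G}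
    (hx : x ≠ 1) {m : ℤ} (hm : 2 ≤ m.natAbs) :
    f (x ^ (2 : ℤ)) ∈ zpowers (f x) ↔ f ((x ^ m) ^ (2 : ℤ)) ∈ zpowers (f (x ^ m)) := by
  have hy : x ^ m ≠ 1 := zpow_ne_one_of_ne_zero htfG hx (by omega)
  -- if the two sides differed, all `f ((x ^ m) ^ l)` would lie between `f x` and `f (x ^ m)`
  have hfam : ∀ S : Set H, S.Finite → ∃ l : ℕ, f ((x ^ m) ^ ((l : ℤ) + 2)) ∉ S := by
    intro S hS
    by_contra! h
    refine (Set.infinite_of_injective_forall_mem (fun l l' hll' => ?_) h) hS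
    have := zpow_right_injective_of_ne_one htfG hy (f.injective hll')
    omega
  have hml : ∀ l : ℕ, 2 ≤ (m * ((l : ℤ) + 2)).natAbs := fun l => by
    rw [Int.natAbs_mul]
    exact hm.trans (Nat.le_mul_of_pos_right _ (by omega))
  constructor
  · intro hxd
    by_contra hyd
    obtain ⟨l, hl⟩ := hfam _ (finite_setOf_mem_zpowers_and_mem_zpowers htfH (f x)
      (powerGraphIso_map_ne_one htfG f hy))
    refine hl ⟨?_, map_mem_zpowers_map_zpow_of_not_mem htfG f hy (by omega)
      (mt (map_zpow_mem_zpowers_iff_map_sq_mem htfG f hy (by omega)).1 hyd)⟩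
    rw [← zpow_mul]
    exact (map_zpow_mem_zpowers_iff_map_sq_mem htfG f hx (hml l)).2 hxd
  · intro hyd
    by_contra hxd
    obtain ⟨l, hl⟩ := hfam _ (finite_setOf_mem_zpowers_and_mem_zpowers htfH (f (x ^ m))
      (powerGraphIso_map_ne_one htfG f hx))
    refine hl ⟨(map_zpow_mem_zpowers_iff_map_sq_mem htfG f hy (by omega)).2 hyd, ?_⟩
    rw [← zpow_mul]
    exact map_mem_zpowers_map_zpow_of_not_mem htfG f hx (hml l)
      (mt (map_zpow_mem_zpowers_iff_map_sq_mem htfG f hx (hml l)).1 hxd)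

lemma map_sq_mem_zpowers_iff_of_hasCommonPower (htfG : ∀ g : G, g ≠ 1 → ¬IsOfFinOrder g)
    (htfH : ∀ h : H, h ≠ 1 → ¬IsOfFinOrder h) (f : powerGraph G ≃g powerGraph H) {x y : G}
    (hx : x ≠ 1) (hy : y ≠ 1) (h : HasCommonPower x y) :
    f (x ^ (2 : ℤ)) ∈ zpowers (f x) ↔ f (y ^ (2 : ℤ)) ∈ zpowers (f y) := by
  obtain ⟨a, b, ha, hb, hab⟩ := h
  have hxy : x ^ (2 * a) = y ^ (2 * b) := by rw [mul_comm, zpow_mul, hab, ← zpow_mul, mul_comm]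
  rw [map_sq_mem_zpowers_iff_of_zpow htfG htfH f hx (m := 2 * a) (by omega), hxy,
    ← map_sq_mem_zpowers_iff_of_zpow htfG htfH f hy (by omega)]

lemma powerGraphIso_map_inv_s18 (htfG : ∀ g : G, g ≠ 1 → ¬IsOfFinOrder g)
    (htfH : ∀ h : H, h ≠ 1 → ¬IsOfFinOrder h) (f : powerGraph G ≃g powerGraph H) {x : G}
    (hx : x ≠ 1) : f x⁻¹ = (f x)⁻¹ := by
  -- `x` and `x⁻¹` are twins in `P(G)`, hence so are their images
  have twin : ∀ a : G, ∀ w, w ≠ f a⁻¹ →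
      (powerGraph H).Adj (f a) w → (powerGraph H).Adj (f a⁻¹) w := by
    intro a w hw hadj
    rw [← f.apply_symm_apply w, f.map_adj_iff] at hadj ⊢
    exact powerGraph_adj_inv_of_adj (fun h => hw (by rw [← h, f.apply_symm_apply])) hadj
  have hxinv : x ≠ x⁻¹ := fun h => by
    have := zpow_right_injective_of_ne_one htfG hx
      (show x ^ (1 : ℤ) = x ^ (-1 : ℤ) by rwa [zpow_one, zpow_neg_one])
    omega
  rcases mem_zpowers_or_of_powerGraph_adj (f.map_adj_iff.2
      (powerGraph_adj_of_mem_zpowers hxinv (inv_ne_one.2 hx) (inv_mem (mem_zpowers x))))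
    with h | h
  · exact eq_inv_of_mem_zpowers_of_powerGraph_adj_imp htfH
      (powerGraphIso_map_ne_one htfG f (inv_ne_one.2 hx)) (f.injective.ne hxinv.symm) h (twin x)
  · rw [eq_inv_of_mem_zpowers_of_powerGraph_adj_imp htfH (powerGraphIso_map_ne_one htfG f hx)
      (f.injective.ne hxinv) h (by simpa using twin x⁻¹), inv_inv]

lemma mem_zpowers_of_zpowers_map_eq (htfG : ∀ g : G, g ≠ 1 → ¬IsOfFinOrder g)
    (htfH : ∀ h : H, h ≠ 1 → ¬IsOfFinOrder h) (f : powerGraph G ≃g powerGraph H) {x y : G}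
    (hx : x ≠ 1) (h : zpowers (f x) = zpowers (f y)) : y ∈ zpowers x := by
  rcases (zpowers_eq_zpowers_iff (htfH _ (powerGraphIso_map_ne_one htfG f hx))).1 h with h | h
  · rw [f.injective h]
    exact mem_zpowers y
  · rw [← powerGraphIso_map_inv_s18 htfG htfH f hx] at h
    rw [← f.injective h]
    exact inv_mem (mem_zpowers x)

lemma map_mem_zpowers_iff_of_forall_sq_mem (htfG : ∀ g : G, g ≠ 1 → ¬IsOfFinOrder g)
    (htfH : ∀ h : H, h ≠ 1 → ¬IsOfFinOrder h) (f : powerGraph G ≃g powerGraph H)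
    (hdir : ∀ x : G, x ≠ 1 → f (x ^ (2 : ℤ)) ∈ zpowers (f x)) {x y : G} (hx : x ≠ 1)
    (hy : y ≠ 1) : y ∈ zpowers x ↔ f y ∈ zpowers (f x) := by
  have mono : ∀ x y : G, x ≠ 1 → y ≠ 1 → y ∈ zpowers x → f y ∈ zpowers (f x) := by
    intro x y hx hy hxy
    obtain ⟨k, rfl⟩ := mem_zpowers_iff.1 hxy
    by_cases hk : 2 ≤ k.natAbs
    · exact (map_zpow_mem_zpowers_iff_map_sq_mem htfG f hx hk).2 (hdir x hx)
    rcases (by omega : k = -1 ∨ k = 0 ∨ k = 1) with rfl | rfl | rfl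
    · rw [zpow_neg_one, powerGraphIso_map_inv_s18 htfG htfH f hx]
      exact inv_mem (mem_zpowers _)
    · exact (hy (zpow_zero x)).elim
    · rw [zpow_one]
      exact mem_zpowers _
  refine ⟨mono x y hx hy, fun h => ?_⟩
  rcases eq_or_ne x y with rfl | hxy
  · exact mem_zpowers x
  have hadj := f.map_adj_iff.1
    (powerGraph_adj_of_mem_zpowers (f.injective.ne hxy) (powerGraphIso_map_ne_one htfG f hy) h)
  refine (mem_zpowers_or_of_powerGraph_adj hadj).elim id fun h' => ?_
  exact mem_zpowers_of_zpowers_map_eq htfG htfH f hx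
    (le_antisymm (zpowers_le.2 (mono y x hy hx h')) (zpowers_le.2 h))

lemma powArc_map_iff_of_forall_sq_mem (htfG : ∀ g : G, g ≠ 1 → ¬IsOfFinOrder g)
    (htfH : ∀ h : H, h ≠ 1 → ¬IsOfFinOrder h) (f : powerGraph G ≃g powerGraph H)
    (hdir : ∀ x : G, x ≠ 1 → f (x ^ (2 : ℤ)) ∈ zpowers (f x)) (x y : G) :
    powArc x y ↔ powArc (f x) (f y) := by
  rcases eq_or_ne x 1 with rfl | hx
  · rw [powerGraphIso_map_one_s18 htfG f]
    exact iff_of_false (not_powArc_one_left y) (not_powArc_one_left _)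
  rw [powArc_iff_mem_zpowers htfG, powArc_iff_mem_zpowers htfH, f.injective.ne_iff,
    ← powerGraphIso_map_one_s18 htfG f, f.injective.ne_iff]
  exact and_congr_right fun _ => and_congr_right fun hy =>
    map_mem_zpowers_iff_of_forall_sq_mem htfG htfH f hdir hx hy

def ReversesPowers (e : G ≃ H) : Prop :=
  ∀ x y : G, x ≠ 1 → y ≠ 1 → (y ∈ zpowers x ↔ e x ∈ zpowers (e y))

lemma reversesPowers_of_forall_sq_not_mem (htfG : ∀ g : G, g ≠ 1 → ¬IsOfFinOrder g)
    (htfH : ∀ h : H, h ≠ 1 → ¬IsOfFinOrder h) (f : powerGraph G ≃g powerGraph H)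
    (hdir : ∀ x : G, x ≠ 1 → f (x ^ (2 : ℤ)) ∉ zpowers (f x)) : ReversesPowers f.toEquiv := by
  have anti : ∀ x y : G, x ≠ 1 → y ≠ 1 → y ∈ zpowers x → f x ∈ zpowers (f y) := by
    intro x y hx hy hxy
    obtain ⟨k, rfl⟩ := mem_zpowers_iff.1 hxy
    by_cases hk : 2 ≤ k.natAbs
    · exact map_mem_zpowers_map_zpow_of_not_mem htfG f hx hk
        (mt (map_zpow_mem_zpowers_iff_map_sq_mem htfG f hx hk).1 (hdir x hx))
    rcases (by omega : k = -1 ∨ k = 0 ∨ k = 1) with rfl | rfl | rfl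
    · rw [zpow_neg_one, powerGraphIso_map_inv_s18 htfG htfH f hx, zpowers_inv]
      exact mem_zpowers _
    · exact (hy (zpow_zero x)).elim
    · rw [zpow_one]
      exact mem_zpowers _
  intro x y hx hy
  refine ⟨anti x y hx hy, fun h => ?_⟩
  rcases eq_or_ne x y with rfl | hxy
  · exact mem_zpowers x
  have hadj := f.map_adj_iff.1
    (powerGraph_adj_of_mem_zpowers (f.injective.ne hxy.symm) (powerGraphIso_map_ne_one htfG f hx)
      h).symm
  refine (mem_zpowers_or_of_powerGraph_adj hadj).elim id fun h' => ?_
  exact mem_zpowers_of_zpowers_map_eq htfG htfH f hx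
    (le_antisymm (zpowers_le.2 h) (zpowers_le.2 (anti y x hy hx h')))

end PowerGraphIso

namespace ReversesPowers

variable {G H : Type*} [Group G] [Group H] {e : G ≃ H}

lemma symm (h : ReversesPowers e) (he : e 1 = 1) : ReversesPowers e.symm := by
  have hne : ∀ u : H, u ≠ 1 → e.symm u ≠ 1 := fun u hu h' =>
    hu (by rw [← e.apply_symm_apply u, h', he])
  intro u v hu hv
  rw [h _ _ (hne v hv) (hne u hu), e.apply_symm_apply, e.apply_symm_apply]

lemma dvd_iff_dvd (htfG : ∀ g : G, g ≠ 1 → ¬IsOfFinOrder g)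
    (htfH : ∀ h : H, h ≠ 1 → ¬IsOfFinOrder h) (h : ReversesPowers e) {β : G} {c : H}
    (hβ : β ≠ 1) (hc : c ≠ 1) {i j i' j' : ℤ} (hi0 : i ≠ 0) (hj0 : j ≠ 0)
    (hi : e (β ^ i) = c ^ i') (hj : e (β ^ j) = c ^ j') : j ∣ i ↔ i' ∣ j' := by
  rw [← zpow_mem_zpowers_zpow_iff htfG hβ, h _ _ (zpow_ne_one_of_ne_zero htfG hβ hj0)
    (zpow_ne_one_of_ne_zero htfG hβ hi0), hi, hj, zpow_mem_zpowers_zpow_iff htfH hc]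

lemma prime_natAbs (htfG : ∀ g : G, g ≠ 1 → ¬IsOfFinOrder g)
    (htfH : ∀ h : H, h ≠ 1 → ¬IsOfFinOrder h) (h : ReversesPowers e) {β : G} {z : H}
    (hβ : β ≠ 1) (hz : z ≠ 1) {p : ℕ} (hp : p.Prime) {m : ℤ} (hm0 : m ≠ 0)
    (hβz : e β = z ^ (p : ℤ)) (hmz : e (β ^ m) = z) : m.natAbs.Prime := by
  have h1 : e (β ^ (1 : ℤ)) = z ^ (p : ℤ) := by rwa [zpow_one]
  have hm : e (β ^ m) = z ^ (1 : ℤ) := by rwa [zpow_one]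
  have hp1 := hp.two_le
  refine Nat.prime_def.2 ⟨?_, fun d hd => ?_⟩
  · by_contra hlt
    have hm1 : m ∣ 1 := Int.natAbs_dvd_natAbs.1 (by simp [show m.natAbs = 1 by omega])
    have := Int.natAbs_le_of_dvd_ne_zero
      ((h.dvd_iff_dvd htfG htfH hβ hz one_ne_zero hm0 h1 hm).1 hm1) one_ne_zero
    omega
  have hd0 : d ≠ 0 := by rintro rfl; omega
  have hdm : (d : ℤ) ∣ m := Int.natCast_dvd.2 hd
  have hγ : β ^ (d : ℤ) ≠ 1 := zpow_ne_one_of_ne_zero htfG hβ (by exact_mod_cast hd0)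
  -- a divisor `d` of `m` gives `e (β ^ d)` between `z` and `z ^ p`, so `d = 1` or `d = |m|`
  obtain ⟨s, hs⟩ : ∃ s, z ^ s = e (β ^ (d : ℤ)) := mem_zpowers_iff.1 <| by
    rw [← hmz]
    exact (h _ _ hγ (zpow_ne_one_of_ne_zero htfG hβ hm0)).1
      ((zpow_mem_zpowers_zpow_iff htfG hβ).2 hdm)
  have tr := fun {j j' : ℤ} => h.dvd_iff_dvd htfG htfH hβ hz (i := (d : ℤ)) (i' := s) (j := j)
    (j' := j') (by exact_mod_cast hd0)
  have hsp : s ∣ p := (tr one_ne_zero hs.symm h1).1 (one_dvd _)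
  rcases hp.eq_one_or_self_of_dvd _ (Int.natAbs_dvd_natAbs.2 hsp) with hs1 | hsp'
  · right
    have hmd : m ∣ d := (tr hm0 hs.symm hm).2 (Int.natAbs_dvd_natAbs.1 (by simp [hs1]))
    exact Nat.dvd_antisymm hd (Int.natAbs_dvd_natAbs.2 hmd)
  · left
    have hd1 : (d : ℤ) ∣ 1 := (h.dvd_iff_dvd htfG htfH hβ hz one_ne_zero
      (by exact_mod_cast hd0) h1 hs.symm).2 (Int.natAbs_dvd_natAbs.1 (by simp [hsp']))
    exact Nat.dvd_one.1 (Int.natCast_dvd.1 hd1)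

lemma natAbs_eq_of_prime_chain (htfG : ∀ g : G, g ≠ 1 → ¬IsOfFinOrder g)
    (htfH : ∀ h : H, h ≠ 1 → ¬IsOfFinOrder h) (h : ReversesPowers e) {β : G} {c : H}
    (hβ : β ≠ 1) (hc : c ≠ 1) {p : ℕ} (hp : p.Prime) {m r u : ℤ} (hq : m.natAbs.Prime)
    (hu0 : u ≠ 0) (e1 : e (β ^ (1 : ℤ)) = c ^ (r * p)) (em : e (β ^ m) = c ^ r)
    (emm : e (β ^ (m * m)) = c ^ (1 : ℤ)) (eu : e (β ^ u) = c ^ (p : ℤ)) : r.natAbs = p := by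
  have hm0 : m ≠ 0 := by rintro rfl; exact Nat.not_prime_zero hq
  have hmm0 : m * m ≠ 0 := mul_ne_zero hm0 hm0
  have hp0 : (p : ℤ) ≠ 0 := by exact_mod_cast hp.ne_zero
  have tr := fun {i j i' j' : ℤ} =>
    h.dvd_iff_dvd htfG htfH hβ hc (i := i) (j := j) (i' := i') (j' := j')
  -- `β ^ u` lies between `β` and `β ^ (m * m)`, so `|u|` is `1`, `|m|` or `|m| ^ 2`
  have hudvd : u.natAbs ∣ m.natAbs ^ 2 := by
    rw [sq, ← Int.natAbs_mul, Int.natAbs_dvd_natAbs]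
    exact (tr hmm0 hu0 emm eu).2 (one_dvd _)
  obtain ⟨k, hk, huk⟩ := (Nat.dvd_prime_pow hq).1 hudvd
  interval_cases k
  · have hrp : r * p ∣ 1 * p := by
      rw [one_mul]
      exact (tr one_ne_zero hu0 e1 eu).1 (Int.natAbs_dvd_natAbs.1 (by simp [huk]))
    have hmm : m * m ∣ m := (tr hm0 hmm0 em emm).2 ((mul_dvd_mul_iff_right hp0).1 hrp)
    have := Int.natAbs_le_of_dvd_ne_zero hmm hm0
    rw [Int.natAbs_mul] at this
    have := hq.two_le
    nlinarith
  · have hrp : r ∣ p := (tr hm0 hu0 em eu).1 (Int.natAbs_dvd_natAbs.1 (by simp [huk]))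
    have hpr : (p : ℤ) ∣ r := (tr hu0 hm0 eu em).1 (Int.natAbs_dvd_natAbs.1 (by simp [huk]))
    rw [Int.natAbs_eq_of_dvd_dvd hrp hpr, Int.natAbs_natCast]
  · have := (tr hu0 hmm0 eu emm).1
      (Int.natAbs_dvd_natAbs.1 (by rw [huk, Int.natAbs_mul, sq]))
    have := Int.natAbs_le_of_dvd_ne_zero this one_ne_zero
    have := hp.two_le
    omega

lemma exists_zpow_prime_eq (htfG : ∀ g : G, g ≠ 1 → ¬IsOfFinOrder g)
    (htfH : ∀ h : H, h ≠ 1 → ¬IsOfFinOrder h) (h : ReversesPowers e) (he : e 1 = 1) (z : H)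
    {p : ℕ} (hp : p.Prime) : ∃ c : H, c ^ (p : ℤ) = z := by
  rcases eq_or_ne z 1 with rfl | hz
  · exact ⟨1, one_zpow _⟩
  have hne : ∀ u : H, u ≠ 1 → e.symm u ≠ 1 := fun u hu h' =>
    hu (by rw [← e.apply_symm_apply u, h', he])
  have hp0 : (p : ℤ) ≠ 0 := by exact_mod_cast hp.ne_zero
  set β := e.symm (z ^ (p : ℤ))
  have hβ : β ≠ 1 := hne _ (zpow_ne_one_of_ne_zero htfH hz hp0)
  obtain ⟨m, hm⟩ : ∃ m, β ^ m = e.symm z := mem_zpowers_iff.1 <|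
    (h β _ hβ (hne z hz)).2 (by simp [β])
  have hm0 : m ≠ 0 := by rintro rfl; exact hne z hz (by rw [← hm, zpow_zero])
  have hmz : e (β ^ m) = z := by rw [hm, e.apply_symm_apply]
  have hq := h.prime_natAbs htfG htfH hβ hz hp hm0 (e.apply_symm_apply _) hmz
  -- the root is `c ^ (±1)` for `c := e (β ^ (m * m))`
  set c := e (β ^ (m * m))
  obtain ⟨r, hr⟩ : ∃ r, c ^ r = z := mem_zpowers_iff.1 <| by
    rw [← hmz]
    exact (h _ _ (zpow_ne_one_of_ne_zero htfG hβ hm0)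
      (zpow_ne_one_of_ne_zero htfG hβ (mul_ne_zero hm0 hm0))).1
      ((zpow_mem_zpowers_zpow_iff htfG hβ).2 (dvd_mul_left m m))
  have hc : c ≠ 1 := by rintro hc; rw [hc, one_zpow] at hr; exact hz hr.symm
  have hcp : c ^ (p : ℤ) ≠ 1 := zpow_ne_one_of_ne_zero htfH hc hp0
  obtain ⟨u, hu⟩ : ∃ u, β ^ u = e.symm (c ^ (p : ℤ)) := mem_zpowers_iff.1 <|
    (h β _ hβ (hne _ hcp)).2 (by
      rw [e.apply_symm_apply, e.apply_symm_apply, ← hr, ← zpow_mul, mul_comm, zpow_mul]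
      exact zpow_mem_zpowers _ _)
  have hu0 : u ≠ 0 := by rintro rfl; exact hne _ hcp (by rw [← hu, zpow_zero])
  have hrp := h.natAbs_eq_of_prime_chain htfG htfH hβ hc hp hq hu0
    (by rw [zpow_one, e.apply_symm_apply, ← hr, ← zpow_mul]) (by rw [hmz, hr])
    (zpow_one c).symm (by rw [hu, e.apply_symm_apply])
  rcases Int.natAbs_eq r with hr' | hr' <;> rw [hrp] at hr'
  · exact ⟨c, by rw [← hr, hr']⟩
  · exact ⟨c⁻¹, by rw [← hr, hr', inv_zpow', zpow_neg]⟩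

lemma exists_zpow_eq (htfG : ∀ g : G, g ≠ 1 → ¬IsOfFinOrder g)
    (htfH : ∀ h : H, h ≠ 1 → ¬IsOfFinOrder h) (h : ReversesPowers e) (he : e 1 = 1) (z : H)
    {n : ℤ} (hn : n ≠ 0) : ∃ c : H, c ^ n = z := by
  suffices hnat : ∀ n : ℕ, n ≠ 0 → ∀ z : H, ∃ c : H, c ^ (n : ℤ) = z by
    obtain ⟨c, hc⟩ := hnat n.natAbs (by omega) z
    rcases Int.natAbs_eq n with hn' | hn'
    · exact ⟨c, by rw [hn', hc]⟩
    · exact ⟨c⁻¹, by rw [hn', inv_zpow', neg_neg, hc]⟩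
  intro n
  induction n using Nat.recOnMul with
  | zero => exact fun h0 => (h0 rfl).elim
  | one => exact fun _ z => ⟨z, by rw [Nat.cast_one, zpow_one]⟩
  | prime p hp => exact fun _ z => h.exists_zpow_prime_eq htfG htfH he z hp
  | mul a b ha hb =>
    intro hab z
    obtain ⟨c, rfl⟩ := hb (right_ne_zero_of_mul hab) z
    obtain ⟨d, rfl⟩ := ha (left_ne_zero_of_mul hab) c
    exact ⟨d, by rw [← zpow_mul, Nat.cast_mul]⟩

end ReversesPowers

section Coordinates

variable {G H : Type*} [Group G] [Group H]

/-- `x` and `y` are the same rational power `x₀ ^ (b / a)`, `y₀ ^ (b / a)` of the base points. -/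
def SameCoord (x₀ : G) (y₀ : H) (x : G) (y : H) : Prop :=
  ∃ a b : ℤ, a ≠ 0 ∧ x ^ a = x₀ ^ b ∧ y ^ a = y₀ ^ b

namespace SameCoord

variable {x₀ x : G} {y₀ y : H}

lemma symm (h : SameCoord x₀ y₀ x y) : SameCoord y₀ x₀ y x :=
  let ⟨a, b, ha, hx, hy⟩ := h
  ⟨a, b, ha, hy, hx⟩

lemma zpow (h : SameCoord x₀ y₀ x y) (n : ℤ) : SameCoord x₀ y₀ (x ^ n) (y ^ n) := by
  obtain ⟨a, b, ha, hx, hy⟩ := h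
  refine ⟨a, b * n, ha, ?_, ?_⟩
  · rw [← zpow_mul, mul_comm, zpow_mul, hx, ← zpow_mul]
  · rw [← zpow_mul, mul_comm, zpow_mul, hy, ← zpow_mul]

lemma unique [IsMulTorsionFree H] (hx₀ : ¬IsOfFinOrder x₀) {y' : H}
    (h : SameCoord x₀ y₀ x y) (h' : SameCoord x₀ y₀ x y') : y = y' := by
  obtain ⟨a, b, ha, hx, hy⟩ := h
  obtain ⟨a', b', ha', hx', hy'⟩ := h'
  have hb : b * a' = b' * a := injective_zpow_iff_not_isOfFinOrder.2 hx₀ <| by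
    show x₀ ^ (b * a') = x₀ ^ (b' * a)
    rw [zpow_mul, ← hx, ← zpow_mul, zpow_mul x₀, ← hx', ← zpow_mul, mul_comm]
  apply zpow_left_injective (mul_ne_zero ha ha')
  simp only
  rw [zpow_mul, hy, ← zpow_mul, hb, mul_comm a a', zpow_mul y', hy', ← zpow_mul]

lemma exists_of_hasCommonPower (hx : x ≠ 1 → HasCommonPower x x₀)
    (hdiv : ∀ (z : H) (n : ℤ), n ≠ 0 → ∃ c : H, c ^ n = z) : ∃ y, SameCoord x₀ y₀ x y := by
  obtain ⟨a, b, ha, hab⟩ : ∃ a b : ℤ, a ≠ 0 ∧ x ^ a = x₀ ^ b := by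
    rcases eq_or_ne x 1 with rfl | hx1
    · exact ⟨1, 0, one_ne_zero, by rw [one_zpow, zpow_zero]⟩
    · obtain ⟨a, b, ha, -, hab⟩ := hx hx1
      exact ⟨a, b, ha, hab⟩
  obtain ⟨y, hy⟩ := hdiv (y₀ ^ b) a ha
  exact ⟨y, a, b, ha, hab, hy⟩

end SameCoord

lemma exists_equiv_map_zpow [IsMulTorsionFree G] [IsMulTorsionFree H] {x₀ : G} {y₀ : H}
    (hx₀ : x₀ ≠ 1) (hy₀ : y₀ ≠ 1) (hG : ∀ x : G, x ≠ 1 → HasCommonPower x x₀)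
    (hH : ∀ y : H, y ≠ 1 → HasCommonPower y y₀)
    (hdivG : ∀ (z : G) (n : ℤ), n ≠ 0 → ∃ c : G, c ^ n = z)
    (hdivH : ∀ (z : H) (n : ℤ), n ≠ 0 → ∃ c : H, c ^ n = z) :
    ∃ e : G ≃ H, ∀ (x : G) (n : ℤ), e (x ^ n) = e x ^ n := by
  choose F hF using fun x => SameCoord.exists_of_hasCommonPower (y₀ := y₀) (hG x) hdivH
  choose F' hF' using fun y => SameCoord.exists_of_hasCommonPower (y₀ := x₀) (hH y) hdivG
  have hx₀' := not_isOfFinOrder_of_isMulTorsionFree hx₀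
  have hy₀' := not_isOfFinOrder_of_isMulTorsionFree hy₀
  exact ⟨⟨F, F', fun x => (hF' (F x)).unique hy₀' (hF x).symm,
    fun y => (hF (F' y)).unique hx₀' (hF' y).symm⟩,
    fun x n => (hF (x ^ n)).unique hx₀' ((hF x).zpow n)⟩

end Coordinates

/-- If `G` is a torsion-free group of nilpotency class at most 2 whose power
graph restricted to the non-identity elements is connected, and `H` is a group
of nilpotency class at most 2 with `P(G) ≅ P(H)`, then the directed power graphs
of `G` and `H` are isomorphic. -/
theorem stmt_18 (G H : Type*) [Group G] [Group H]
    (htf : ∀ g : G, g ≠ 1 → ¬ IsOfFinOrder g)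
    (hGnil : commutator G ≤ Subgroup.center G)
    (hHnil : commutator H ≤ Subgroup.center H)
    (hconn : ((powerGraph G).induce {g : G | g ≠ 1}).Connected)
    (h : Nonempty (powerGraph G ≃g powerGraph H)) :
    ∃ e : G ≃ H, ∀ x y : G, powArc x y ↔ powArc (e x) (e y) := by
  obtain ⟨f⟩ := h
  have htfH := torsionFree_of_powerGraphIso htf f
  have hreach : ∀ x y : G, x ≠ 1 → y ≠ 1 → (powerGraph G).Reachable x y := fun x y hx hy =>
    (hconn.preconnected ⟨x, hx⟩ ⟨y, hy⟩).map (SimpleGraph.Embedding.induce _).toHom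
  have hcpG : ∀ x y : G, x ≠ 1 → y ≠ 1 → HasCommonPower x y := fun x y hx hy =>
    hasCommonPower_of_reachable htf hx (hreach x y hx hy)
  by_cases hdir : ∀ x : G, x ≠ 1 → f (x ^ (2 : ℤ)) ∈ zpowers (f x)
  · exact ⟨f.toEquiv, powArc_map_iff_of_forall_sq_mem htf htfH f hdir⟩
  -- otherwise `f` reverses powers everywhere, which forces both groups to be divisible
  push Not at hdir
  obtain ⟨x₀, hx₀, hfx₀⟩ := hdir
  have hrev := reversesPowers_of_forall_sq_not_mem htf htfH f fun x hx =>
    (map_sq_mem_zpowers_iff_of_hasCommonPower htf htfH f hx hx₀ (hcpG x x₀ hx hx₀)).not.2 hfx₀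
  have hf1 := powerGraphIso_map_one_s18 htf f
  have hcpH : ∀ u v : H, u ≠ 1 → v ≠ 1 → HasCommonPower u v := fun u v hu hv =>
    hasCommonPower_of_reachable htfH hu (powerGraphIso_reachable htf f hreach hu hv)
  have := isMulTorsionFree_of_forall_commute htf (commute_of_forall_hasCommonPower hGnil htf hcpG)
  have := isMulTorsionFree_of_forall_commute htfH
    (commute_of_forall_hasCommonPower hHnil htfH hcpH)
  obtain ⟨e, he⟩ := exists_equiv_map_zpow hx₀ (powerGraphIso_map_ne_one htf f hx₀)
    (fun x hx => hcpG x x₀ hx hx₀) (fun y hy => hcpH y _ hy (powerGraphIso_map_ne_one htf f hx₀))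
    (fun z _ hn => (hrev.symm hf1).exists_zpow_eq htfH htf
      ((Equiv.symm_apply_eq _).2 hf1.symm) z hn)
    (fun z _ hn => hrev.exists_zpow_eq htf htfH hf1 z hn)
  exact ⟨e, powArc_congr_of_map_zpow e he⟩
end
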